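/- arXiv:0710.5568 — 3 statements merged into one kernel-verified Lean document; each statement's English description precedes it below -/
import Mathlib

section
/- Let G be a finite group of central type with nondegenerate 2-cocycle c and M_n(C) ≅ C^cG with its fine G-grading. If a polynomial p ∈ Σ(C) is a graded identity of M_n(C), then each homogeneous component of p (with respect to the congruence relation on monomials) is also a graded identity; moreover every graded identity is a C-linear combination of elementary identities. -/
open scoped BigOperators

noncomputable section

namespace Paper

/-- The 2-cocycle condition for `c : G → G → ℂˣ` (trivial action of `G` on `ℂˣ`). -/
def IsCocycle {G : Type*} [Group G] {M : Type*} [CommGroup M] (c : G → G → M) : Prop :=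
  ∀ g h k : G, c g h * c (g * h) k = c h k * c g (h * k)

/-- Two (unit-valued) 2-cochains are cohomologous (over the common coefficient group). -/
def Cohomologous {G : Type*} [Group G] {M : Type*} [CommGroup M] (c c' : G → G → M) : Prop :=
  ∃ lam : G → M, ∀ g h : G, c' g h = lam g * lam h * (lam (g * h))⁻¹ * c g h

/-- `u : G → A` is a twisted basis of the `k`-algebra `A` for the 2-cocycle `c`;
this expresses that `A` is (isomorphic to) the twisted group algebra `k^c G`,
with its canonical fine `G`-grading `A_g = k·(u g)`. -/
def IsTwistedBasis (k : Type*) {A G : Type*} [CommRing k] [Ring A] [Algebra k A] [Group G]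
    (c : G → G → kˣ) (u : G → A) : Prop :=
  LinearIndependent k u ∧ Submodule.span k (Set.range u) = ⊤ ∧
    ∀ g h : G, u g * u h = ((c g h : k)) • u (g * h)

/-- A 2-cocycle `c` on `G` with values in `ℂˣ` is nondegenerate iff the twisted group
algebra `ℂ^c G` is central simple over `ℂ`, i.e. iff it is a full matrix algebra. -/
def IsNondeg {G : Type*} [Group G] (c : G → G → ℂˣ) : Prop :=
  IsCocycle c ∧ ∃ (n : ℕ) (u : G → Matrix (Fin n) (Fin n) ℂ), IsTwistedBasis ℂ c u

/-- The extended cocycle value `c(g₁, …, g_k)`, defined by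
`u_{g₁} ⋯ u_{g_k} = c(g₁,…,g_k) u_{g₁⋯g_k}` in `ℂ^c G`. -/
def cExt {G : Type*} [Group G] (c : G → G → ℂˣ) : List G → ℂˣ
  | [] => 1
  | g :: l => c g l.prod * cExt c l

/-- Two monomials (words in the variables `x_{ig}`, recorded as lists of pairs `(i,g)`)
are congruent: one is a permutation of the other and they have the same degree. -/
def Congruent {G : Type*} [Group G] (Z₁ Z₂ : List (ℕ × G)) : Prop :=
  Z₁.Perm Z₂ ∧ (Z₁.map Prod.snd).prod = (Z₂.map Prod.snd).prod

/-- The coefficient `c(B) = c(g₁,…,g_k)/c(g_{π(1)},…,g_{π(k)})` of the elementary identity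
attached to the pair of congruent monomials `Z₁`, `Z₂`. -/
def elemCoeff {G : Type*} [Group G] (c : G → G → ℂˣ) (Z₁ Z₂ : List (ℕ × G)) : ℂˣ :=
  cExt c (Z₁.map Prod.snd) * (cExt c (Z₂.map Prod.snd))⁻¹

/-- The set `μ` of coefficients of elementary identities. -/
def muSet {G : Type*} [Group G] (c : G → G → ℂˣ) : Set ℂˣ :=
  {x | ∃ Z₁ Z₂ : List (ℕ × G), Congruent Z₁ Z₂ ∧ x = elemCoeff c Z₁ Z₂}

/-- The field of definition `ℚ(μ)`, as a subfield of `ℂ`. -/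
def Qmu {G : Type*} [Group G] (c : G → G → ℂˣ) : Subfield ℂ :=
  Subfield.closure ((fun x : ℂˣ => (x : ℂ)) '' muSet c)

/-- The free (associative, unital) `G`-graded `k`-algebra `Σ(k) = k⟨x_{ig}⟩` on the
variables `x_{ig}`, `i ∈ ℕ`, `g ∈ G`; the degree of the monomial `x_{i₁g₁}⋯x_{i_kg_k}`
is `g₁⋯g_k`. -/
abbrev FreeAlg (k : Type*) [CommSemiring k] (G : Type*) : Type _ :=
  MonoidAlgebra k (FreeMonoid (ℕ × G))

/-- The variable `x_{ig}` as an element of the free algebra. -/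
def xVar {k : Type*} [CommSemiring k] {G : Type*} (i : ℕ) (g : G) : FreeAlg k G :=
  MonoidAlgebra.single (FreeMonoid.ofList [(i, g)]) 1

/-- Evaluation of the monomial `Z = x_{i₁g₁}⋯x_{i_kg_k}` under the graded substitution
`x_{ig} ↦ (lam (i,g)) • u g` (every degree-`g` element of `ℂ^c G` is a scalar multiple
of `u g`). -/
def evalMon {G A : Type*} [Group G] [Ring A] [Algebra ℂ A] (u : G → A)
    (lam : ℕ × G → ℂ) (Z : List (ℕ × G)) : A :=
  (Z.map fun x => lam x • u x.2).prod

/-- `p ∈ Σ(ℂ)` is a graded identity of the `G`-graded algebra with twisted basis `u`. -/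
def IsGradedIdentity {G A : Type*} [Group G] [Ring A] [Algebra ℂ A] (u : G → A)
    (p : FreeAlg ℂ G) : Prop :=
  ∀ lam : ℕ × G → ℂ, (p.coeff.sum fun Z coef => coef • evalMon u lam (FreeMonoid.toList Z)) = 0

/-- Graded identities with coefficients in a subfield `L ⊆ ℂ`. -/
def IsGradedIdentityS {G A : Type*} [Group G] [Ring A] [Algebra ℂ A] (L : Subfield ℂ)
    (u : G → A) (p : FreeAlg ↥L G) : Prop :=
  ∀ lam : ℕ × G → ℂ,
    (p.coeff.sum fun Z coef => ((coef : ℂ)) • evalMon u lam (FreeMonoid.toList Z)) = 0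

/-- The elementary identity `B = Z₁ - c(B) Z₂` attached to congruent monomials. -/
def elemIdent {G : Type*} [Group G] (c : G → G → ℂˣ) (Z₁ Z₂ : List (ℕ × G)) :
    FreeAlg ℂ G :=
  MonoidAlgebra.single (FreeMonoid.ofList Z₁) 1 -
    MonoidAlgebra.single (FreeMonoid.ofList Z₂) ((elemCoeff c Z₁ Z₂ : ℂˣ) : ℂ)


section Aux
variable {G : Type*} [Group G]

lemma cocycle_one_left {c : G → G → ℂˣ} (hc : IsCocycle c) (g : G) : c 1 g = c 1 1 := by
  have h := hc 1 1 g
  simp only [one_mul] at h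
  exact (mul_right_cancel h).symm

lemma cocycle_one_right {c : G → G → ℂˣ} (hc : IsCocycle c) (g : G) : c g 1 = c 1 1 := by
  have h := hc g 1 1
  simp only [mul_one, one_mul] at h
  have h2 : c g 1 * c g 1 = c g 1 * c 1 1 := h.trans (mul_comm _ _)
  exact mul_left_cancel h2

lemma u_one {A : Type*} [Ring A] [Algebra ℂ A] {c : G → G → ℂˣ} (hc : IsCocycle c)
    {u : G → A} (hu : IsTwistedBasis ℂ c u) : u 1 = ((c 1 1 : ℂˣ) : ℂ) • 1 := by
  have key : ∀ x : A, u 1 * x = ((c 1 1 : ℂˣ) : ℂ) • x := by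
    intro x
    have hx : x ∈ Submodule.span ℂ (Set.range u) := by rw [hu.2.1]; trivial
    induction hx using Submodule.span_induction with
    | mem y hy =>
      obtain ⟨g, rfl⟩ := hy
      rw [hu.2.2 1 g, one_mul, cocycle_one_left hc g]
    | zero => simp
    | add a b _ _ ha hb => rw [mul_add, ha, hb, smul_add]
    | smul r a _ ha => rw [mul_smul_comm, ha, smul_comm]
  calc u 1 = u 1 * 1 := (mul_one _).symm
    _ = _ := key 1

lemma evalMon_eq {A : Type*} [Ring A] [Algebra ℂ A] {c : G → G → ℂˣ} (hc : IsCocycle c)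
    {u : G → A} (hu : IsTwistedBasis ℂ c u) (lam : ℕ × G → ℂ) (Z : List (ℕ × G)) :
    evalMon u lam Z =
      ((Z.map lam).prod * ((cExt c (Z.map Prod.snd) : ℂˣ) : ℂ) * (((c 1 1 : ℂˣ) : ℂ))⁻¹) •
        u ((Z.map Prod.snd).prod) := by
  induction Z with
  | nil =>
    simp only [evalMon, List.map_nil, List.prod_nil, cExt, Units.val_one, one_mul]
    rw [u_one hc hu, smul_smul, inv_mul_cancel₀ (Units.ne_zero _), one_smul]
  | cons a Z ih =>
    have step : evalMon u lam (a :: Z) = (lam a • u a.2) * evalMon u lam Z := by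
      simp [evalMon]
    rw [step, ih, smul_mul_smul_comm, hu.2.2 a.2 ((Z.map Prod.snd).prod), smul_smul]
    simp only [List.map_cons, List.prod_cons, cExt, Units.val_mul]
    ring_nf

omit [Group G] in
lemma prod_X_eq [DecidableEq (ℕ × G)] (L : List (ℕ × G)) :
    (L.map (MvPolynomial.X (R := ℂ))).prod =
      MvPolynomial.monomial (Multiset.toFinsupp (↑L : Multiset (ℕ × G))) 1 := by
  induction L with
  | nil =>
    simp [MvPolynomial.monomial_zero']
  | cons a L ih =>
    simp only [List.map_cons, List.prod_cons, ih]
    rw [MvPolynomial.X, MvPolynomial.monomial_mul, one_mul]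
    congr 1
    rw [← Multiset.cons_coe, ← Multiset.singleton_add, map_add, Multiset.toFinsupp_singleton]

end Aux

open scoped Classical in
/-- If `p ∈ Σ(ℂ)` is a graded identity of `M_n(ℂ) ≅ ℂ^c G` then each
homogeneous component of `p` (the part of `p` supported on a single congruence class of
monomials) is a graded identity as well; moreover every graded identity is a
`ℂ`-linear combination of elementary identities. -/
theorem homogeneous_components_of_identity_and_span_by_elementary
    {G : Type*} [Group G] [Fintype G] (c : G → G → ℂˣ) (hc : IsNondeg c)
    {n : ℕ} (u : G → Matrix (Fin n) (Fin n) ℂ) (hu : IsTwistedBasis ℂ c u)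
    (p : FreeAlg ℂ G) (hp : IsGradedIdentity u p) :
    (∀ Z : List (ℕ × G),
        IsGradedIdentity u
          (MonoidAlgebra.ofCoeff (Finsupp.filter (fun W : FreeMonoid (ℕ × G) => Congruent Z (FreeMonoid.toList W)) p.coeff))) ∧
      p ∈ Submodule.span ℂ
        {q : FreeAlg ℂ G | ∃ Z₁ Z₂ : List (ℕ × G), Congruent Z₁ Z₂ ∧ q = elemIdent c Z₁ Z₂} := by
  classical
  obtain ⟨hcoc, -⟩ := hc
  set c1 : ℂ := ((c 1 1 : ℂˣ) : ℂ) with hc1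
  set S : Finset (FreeMonoid (ℕ × G)) := p.coeff.support with hS
  set deg : FreeMonoid (ℕ × G) → G := fun W => ((FreeMonoid.toList W).map Prod.snd).prod with hdeg
  set ms : FreeMonoid (ℕ × G) → Multiset (ℕ × G) :=
    fun W => ((FreeMonoid.toList W : List (ℕ × G)) : Multiset (ℕ × G)) with hms
  set cE : FreeMonoid (ℕ × G) → ℂ :=
    fun W => ((cExt c ((FreeMonoid.toList W).map Prod.snd) : ℂˣ) : ℂ) with hcE
  set mono : (ℕ × G → ℂ) → FreeMonoid (ℕ × G) → ℂ :=
    fun lam W => ((FreeMonoid.toList W).map lam).prod with hmono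
  -- Step A
  have hA : ∀ (lam : ℕ × G → ℂ) (g : G),
      ∑ W ∈ S.filter (fun W => deg W = g), p.coeff W * mono lam W * cE W = 0 := by
    intro lam g
    have h0 := hp lam
    rw [Finsupp.sum] at h0
    have h1 : ∑ W ∈ S, (p.coeff W * (mono lam W * cE W * c1⁻¹)) • u (deg W) = 0 := by
      rw [← h0]
      exact Finset.sum_congr rfl fun W _ => by
        rw [evalMon_eq hcoc hu lam, smul_smul]
    have h2 : ∑ h ∈ Finset.univ, (∑ W ∈ S.filter (fun W => deg W = h),
        p.coeff W * (mono lam W * cE W * c1⁻¹)) • u h = 0 := by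
      rw [← h1, ← Finset.sum_fiberwise_of_maps_to (fun W _ => Finset.mem_univ (deg W))
        (fun W => (p.coeff W * (mono lam W * cE W * c1⁻¹)) • u (deg W))]
      exact Finset.sum_congr rfl fun h _ => by
        rw [Finset.sum_smul]
        exact Finset.sum_congr rfl fun W hW => by
          rw [(Finset.mem_filter.mp hW).2]
    have h3 := Fintype.linearIndependent_iff.mp hu.1 _ h2 g
    have h4 : (∑ W ∈ S.filter (fun W => deg W = g), p.coeff W * mono lam W * cE W) * c1⁻¹ = 0 := by
      rw [Finset.sum_mul, ← h3]
      exact Finset.sum_congr rfl fun W _ => by ring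
    rcases mul_eq_zero.mp h4 with h | h
    · exact h
    · exact absurd h (inv_ne_zero (Units.ne_zero _))
  -- Step B
  have hB : ∀ (m : Multiset (ℕ × G)) (g : G),
      ∑ W ∈ S.filter (fun W => ms W = m ∧ deg W = g), p.coeff W * cE W = 0 := by
    intro m g
    set q : MvPolynomial (ℕ × G) ℂ :=
      ∑ W ∈ S.filter (fun W => deg W = g),
        MvPolynomial.C (p.coeff W * cE W) * ((FreeMonoid.toList W).map MvPolynomial.X).prod with hq
    have hq0 : q = 0 := by
      apply MvPolynomial.funext
      intro lam
      rw [map_zero, map_sum]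
      rw [← hA lam g]
      refine Finset.sum_congr rfl fun W _ => ?_
      rw [map_mul, MvPolynomial.eval_C, map_list_prod, List.map_map]
      have : (MvPolynomial.eval lam ∘ MvPolynomial.X : ℕ × G → ℂ) = lam := by
        funext x; simp
      rw [this]
      ring
    have hco := congrArg (MvPolynomial.coeff (Multiset.toFinsupp m)) hq0
    rw [hq, MvPolynomial.coeff_zero] at hco
    rw [MvPolynomial.coeff_sum] at hco
    have hco2 : ∑ W ∈ S.filter (fun W => deg W = g),
        (if ms W = m then p.coeff W * cE W else 0) = 0 := by
      refine Eq.trans (Finset.sum_congr rfl fun W _ => ?_) hco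
      rw [prod_X_eq, MvPolynomial.C_mul_monomial, mul_one, MvPolynomial.coeff_monomial]
      by_cases h : ms W = m
      · rw [if_pos h, if_pos (congrArg Multiset.toFinsupp h)]
      · rw [if_neg h, if_neg fun hcon => h (Multiset.toFinsupp.injective hcon)]
    have hsw : ∑ W ∈ S.filter (fun W => ms W = m ∧ deg W = g), p.coeff W * cE W
        = ∑ W ∈ (S.filter (fun W => deg W = g)).filter (fun W => ms W = m), p.coeff W * cE W := by
      rw [Finset.filter_filter]
      refine Finset.sum_congr (Finset.filter_congr fun W _ => ?_) fun _ _ => rfl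
      exact and_comm
    rw [hsw, Finset.sum_filter]
    exact hco2
  -- Conclusions
  refine ⟨?_, ?_⟩
  · -- each homogeneous component is an identity
    intro Z lam
    rw [MonoidAlgebra.coeff_ofCoeff, Finsupp.sum, Finsupp.support_filter]
    set g0 := (Z.map Prod.snd).prod with hg0
    have hsum0 : ∑ W ∈ S.filter (fun W => Congruent Z (FreeMonoid.toList W)), p.coeff W * cE W = 0 := by
      have hfeq : S.filter (fun W => Congruent Z (FreeMonoid.toList W))
          = S.filter (fun W => ms W = ((Z : List (ℕ × G)) : Multiset (ℕ × G)) ∧ deg W = g0) :=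
        Finset.filter_congr fun W _ => by
          constructor
          · rintro ⟨hperm, hprod⟩
            exact ⟨Multiset.coe_eq_coe.mpr hperm.symm, hprod.symm⟩
          · rintro ⟨h1, h2⟩
            exact ⟨(Multiset.coe_eq_coe.mp h1).symm, h2.symm⟩
      rw [hfeq]
      exact hB _ _
    have hterm : ∀ W ∈ S.filter (fun W => Congruent Z (FreeMonoid.toList W)),
        (Finsupp.filter (fun W => Congruent Z (FreeMonoid.toList W)) p.coeff) W •
            evalMon u lam (FreeMonoid.toList W)
          = (((Z.map lam).prod * c1⁻¹) * (p.coeff W * cE W)) • u g0 := by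
      intro W hW
      obtain ⟨hWS, hcong⟩ := Finset.mem_filter.mp hW
      rw [Finsupp.filter_apply_pos (fun W => Congruent Z (FreeMonoid.toList W)) p.coeff hcong,
        evalMon_eq hcoc hu lam, smul_smul]
      have h1 : ((FreeMonoid.toList W).map lam).prod = (Z.map lam).prod :=
        ((hcong.1.map lam).prod_eq).symm
      have h2 : ((FreeMonoid.toList W).map Prod.snd).prod = g0 := hcong.2.symm
      rw [h1, h2]
      congr 1
      ring
    rw [Finset.sum_congr rfl hterm, ← Finset.sum_smul, ← Finset.mul_sum, hsum0,
      mul_zero, zero_smul]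
  · -- span by elementary identities
    set κ : FreeMonoid (ℕ × G) → Multiset (ℕ × G) × G := fun W => (ms W, deg W) with hκ
    have hex : ∀ W, W ∈ S → ∃ r, r ∈ S ∧ κ r = κ W := fun W hW => ⟨W, hW, rfl⟩
    set rep : Multiset (ℕ × G) × G → FreeMonoid (ℕ × G) := fun k =>
      if h : ∃ r, r ∈ S ∧ κ r = k then h.choose else 1 with hrep
    have hrepspec : ∀ (k) (h : ∃ r, r ∈ S ∧ κ r = k), rep k ∈ S ∧ κ (rep k) = k := by
      intro k h
      simp only [hrep, dif_pos h]
      exact h.choose_spec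
    have hsingle : ∀ W ∈ S,
        p.coeff W • elemIdent c (FreeMonoid.toList W) (FreeMonoid.toList (rep (κ W)))
          = MonoidAlgebra.single W (p.coeff W) -
            MonoidAlgebra.single (rep (κ W)) (p.coeff W * (cE W * (cE (rep (κ W)))⁻¹)) := by
      intro W hW
      rw [elemIdent, smul_sub]
      congr 1
      · rw [FreeMonoid.ofList_toList, MonoidAlgebra.smul_single', mul_one]
      · rw [FreeMonoid.ofList_toList, MonoidAlgebra.smul_single']
        rw [elemCoeff, Units.val_mul, Units.val_inv_eq_inv_val]
    have hdecomp : p = ∑ W ∈ S,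
        p.coeff W • elemIdent c (FreeMonoid.toList W) (FreeMonoid.toList (rep (κ W))) := by
      have h1 : ∑ W ∈ S,
            p.coeff W • elemIdent c (FreeMonoid.toList W) (FreeMonoid.toList (rep (κ W)))
          = (∑ W ∈ S, MonoidAlgebra.single W (p.coeff W)) -
            ∑ W ∈ S, MonoidAlgebra.single (rep (κ W)) (p.coeff W * (cE W * (cE (rep (κ W)))⁻¹)) := by
        rw [← Finset.sum_sub_distrib]
        exact Finset.sum_congr rfl hsingle
      have h2 : ∑ W ∈ S, MonoidAlgebra.single W (p.coeff W) = p := by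
        conv_rhs => rw [← MonoidAlgebra.sum_coeff_single p]
        rw [Finsupp.sum]
      have h3 : ∑ W ∈ S, MonoidAlgebra.single (rep (κ W)) (p.coeff W * (cE W * (cE (rep (κ W)))⁻¹))
          = 0 := by
        rw [← Finset.sum_fiberwise_of_maps_to (fun W hW => Finset.mem_image_of_mem κ hW)
          (fun W => MonoidAlgebra.single (rep (κ W)) (p.coeff W * (cE W * (cE (rep (κ W)))⁻¹)))]
        refine Finset.sum_eq_zero fun k hk => ?_
        obtain ⟨W0, hW0S, hW0k⟩ := Finset.mem_image.mp hk
        have hBk : ∑ W ∈ S.filter (fun W => κ W = k), p.coeff W * cE W = 0 := by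
          have hfeq : S.filter (fun W => κ W = k)
              = S.filter (fun W => ms W = k.1 ∧ deg W = k.2) :=
            Finset.filter_congr fun W _ => by
              constructor
              · rintro rfl; exact ⟨rfl, rfl⟩
              · rintro ⟨h1', h2'⟩
                simp only [hκ]
                rw [h1', h2']
          rw [hfeq]
          exact hB _ _
        calc ∑ W ∈ S.filter (fun W => κ W = k),
              MonoidAlgebra.single (rep (κ W)) (p.coeff W * (cE W * (cE (rep (κ W)))⁻¹))
            = ∑ W ∈ S.filter (fun W => κ W = k),
              MonoidAlgebra.single (rep k) ((p.coeff W * cE W) * (cE (rep k))⁻¹) := by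
              refine Finset.sum_congr rfl fun W hW => ?_
              rw [(Finset.mem_filter.mp hW).2, mul_assoc]
          _ = MonoidAlgebra.single (rep k)
                (∑ W ∈ S.filter (fun W => κ W = k), (p.coeff W * cE W) * (cE (rep k))⁻¹) :=
              (map_sum (MonoidAlgebra.singleAddHom (rep k)) _ _).symm
          _ = 0 := by
              rw [← Finset.sum_mul, hBk, zero_mul, MonoidAlgebra.single_zero]
      rw [h1, h2, h3, sub_zero]
    rw [hdecomp]
    refine Submodule.sum_mem _ fun W hW => Submodule.smul_mem _ _ (Submodule.subset_span ?_)
    refine ⟨FreeMonoid.toList W, FreeMonoid.toList (rep (κ W)), ?_, rfl⟩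
    have hk := (hrepspec (κ W) (hex W hW)).2
    have hms' : ms (rep (κ W)) = ms W := congrArg Prod.fst hk
    have hdeg' : deg (rep (κ W)) = deg W := congrArg Prod.snd hk
    exact ⟨(Multiset.coe_eq_coe.mp hms').symm, hdeg'.symm⟩


end Paper
end
end

section
/- Let G be a finite group of central type with nondegenerate normalized 2-cocycle c, let t_{ig} (i ≥ 1, g ∈ G) be commuting indeterminates with t_g = t_{1g}, let k be the field generated over Q by the t_{ig} and the values of c, and let Ū be the Q(μ)-subalgebra of k^cG generated by all elements t_{ig}u_g (the generic graded algebra). Then the center Z̄ of Ū is the Q(μ)-subalgebra generated by the monomials t_{i₁g₁}u_{g₁} t_{i₂g₂}u_{g₂} ··· t_{i_mg_m}u_{g_m} with g₁g₂···g_m = 1; moreover Z̄ ⊆ k, so Z̄ is an integral domain. -/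
open scoped BigOperators

noncomputable section

namespace Paper

/-! ### The generic setup: commuting indeterminates `t_{ig}`, the field `k`, the generic
cocycle `s`, and the generic (universal) graded algebra. -/

/-- A big rational function field containing `ℂ` and the commuting indeterminates
`t_{ig}` (`i ∈ ℕ`, `g ∈ G`). -/
abbrev KK (G : Type*) : Type _ := FractionRing (MvPolynomial (ℕ × G) ℂ)

/-- The indeterminate `t_{ig}` inside `KK G`. -/
def tVar (G : Type*) (p : ℕ × G) : KK G :=
  algebraMap (MvPolynomial (ℕ × G) ℂ) (KK G) (MvPolynomial.X p)

/-- The canonical embedding of `ℂ` into `KK G`. -/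
def iotaC (G : Type*) : ℂ →+* KK G :=
  (algebraMap (MvPolynomial (ℕ × G) ℂ) (KK G)).comp (algebraMap ℂ (MvPolynomial (ℕ × G) ℂ))

/-- `t_{ig}` as a unit of `KK G`. -/
def tUnit (G : Type*) (p : ℕ × G) : (KK G)ˣ :=
  Units.mk0 (tVar G p) (fun h =>
    MvPolynomial.X_ne_zero (R := ℂ) p
      (IsFractionRing.injective (MvPolynomial (ℕ × G) ℂ) (KK G)
        (h.trans (map_zero (algebraMap (MvPolynomial (ℕ × G) ℂ) (KK G))).symm)))

/-- The cocycle `c` viewed with values in `(KK G)ˣ`. -/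
def cKK {G : Type*} [Group G] (c : G → G → ℂˣ) (g h : G) : (KK G)ˣ :=
  Units.map (iotaC G).toMonoidHom (c g h)

/-- `t_g := t_{1g}` as a unit of `KK G` (the index `0 : ℕ` plays the role of `1`). -/
def tU (G : Type*) (g : G) : (KK G)ˣ := tUnit G (0, g)

/-- The generic cocycle `s(g,h) = (t_g t_h / t_{gh})·c(g,h)`. -/
def sKK {G : Type*} [Group G] (c : G → G → ℂˣ) (g h : G) : (KK G)ˣ :=
  tU G g * tU G h * (tU G (g * h))⁻¹ * cKK c g h

/-- The field `k = ℚ(t_{ig}, c(g,h))`, as a subfield of `KK G`. -/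
def kSmall {G : Type*} [Group G] (c : G → G → ℂˣ) : Subfield (KK G) :=
  Subfield.closure (Set.range (tVar G) ∪ {x | ∃ g h : G, x = (cKK c g h : KK G)})

/-- The field of definition `ℚ(μ)` realized inside `KK G`. -/
def QmuK {G : Type*} [Group G] (c : G → G → ℂˣ) : Subfield (KK G) :=
  Subfield.closure {x | ∃ w ∈ muSet c, x = iotaC G ((w : ℂˣ) : ℂ)}

/-- The generators `t_{ig}·u_g` of the generic graded algebra, inside a realization
`A` of `k^c G` (more precisely of `(KK G)^c G`) with twisted basis `u`. -/
def genGen {G A : Type*} [Group G] [Ring A] [Algebra (KK G) A] (u : G → A)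
    (p : ℕ × G) : A :=
  tVar G p • u p.2

/-- The generic graded algebra `Ū`: the `ℚ(μ)`-subalgebra generated by the elements
`t_{ig} u_g` (as a subring generated by `ℚ(μ)`-scalars together with these elements). -/
def Ubar {G A : Type*} [Group G] [Ring A] [Algebra (KK G) A] (c : G → G → ℂˣ)
    (u : G → A) : Subring A :=
  Subring.closure
    ((algebraMap (KK G) A '' ((QmuK c : Subfield (KK G)) : Set (KK G))) ∪
      Set.range (genGen u))

/-- The center `Z̄` of the generic graded algebra `Ū`. -/
def ZUbar {G A : Type*} [Group G] [Ring A] [Algebra (KK G) A] (c : G → G → ℂˣ)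
    (u : G → A) : Set A :=
  {a : A | a ∈ Ubar c u ∧ ∀ b ∈ Ubar c u, a * b = b * a}

/-- The monomials `t_{i₁g₁}u_{g₁} ⋯ t_{i_mg_m}u_{g_m}` with `g₁⋯g_m = 1`. -/
def Mon1 {G A : Type*} [Group G] [Ring A] [Algebra (KK G) A] (u : G → A) : Set A :=
  {x : A | ∃ l : List (ℕ × G), (l.map Prod.snd).prod = 1 ∧ x = (l.map (genGen u)).prod}

/-- The field of fractions `F` of the center of `Ū`, realized inside `KK G`. -/
def FF {G A : Type*} [Group G] [Ring A] [Algebra (KK G) A] (c : G → G → ℂˣ)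
    (u : G → A) : Subfield (KK G) :=
  Subfield.closure {x : KK G | algebraMap (KK G) A x ∈ ZUbar c u}

/-- The subgroup `Y ⊆ k^×` generated by the values of the generic cocycle `s`. -/
def Ysub {G : Type*} [Group G] (c : G → G → ℂˣ) : Subgroup (KK G)ˣ :=
  Subgroup.closure {x : (KK G)ˣ | ∃ g h : G, x = sKK c g h}

/-- The ring `S = ℚ(μ)[Y]`. -/
def Ssub {G : Type*} [Group G] (c : G → G → ℂˣ) : Subring (KK G) :=
  Subring.closure
    (((QmuK c : Subfield (KK G)) : Set (KK G)) ∪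
      {x | ∃ g h : G, x = (sKK c g h : KK G)} ∪
      {x | ∃ g h : G, x = ((sKK c g h)⁻¹ : (KK G)ˣ)})

/-- The central localization `Q(U_G) = F ⊗_Z U_G ≅ F^s G`, realized inside `A` as the
`F`-span of the elements `t_g u_g`, `g ∈ G`. -/
def QUset {G A : Type*} [Group G] [Fintype G] [Ring A] [Algebra (KK G) A]
    (c : G → G → ℂˣ) (u : G → A) : Set A :=
  {x : A | ∃ f : G → KK G, (∀ g, f g ∈ FF c u) ∧ x = ∑ g : G, f g • genGen u (0, g)}

/-- A cocycle `c` is normalized when `c(1,g) = c(g,1) = 1` (so `u_1 = 1`). -/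
def IsNormalized {G : Type*} [Group G] (c : G → G → ℂˣ) : Prop :=
  (∀ g : G, c 1 g = 1) ∧ ∀ g : G, c g 1 = 1

lemma nondeg_comb {G : Type*} [Group G] [Fintype G] {c : G → G → ℂˣ}
    (hc : IsNondeg c) (hnorm : IsNormalized c) :
    ∀ g : G, g ≠ 1 → ∃ h : G, g * h = h * g ∧ c g h ≠ c h g := by
  classical
  obtain ⟨hcoc, n, u, hLI, hsp, hmul⟩ := hc
  intro g hg
  by_contra hcon
  push_neg at hcon
  let M := Matrix (Fin n) (Fin n) ℂ
  have hspan : ∀ x : M, x ∈ Submodule.span ℂ (Set.range u) := fun x => by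
    rw [hsp]; trivial
  have huone : ∀ x : M, u 1 * x = x := by
    intro x
    induction hspan x using Submodule.span_induction with
    | mem y hy =>
        obtain ⟨h, rfl⟩ := hy
        rw [hmul, hnorm.1, one_mul, Units.val_one, one_smul]
    | zero => rw [mul_zero]
    | add a b _ _ ha hb => rw [mul_add, ha, hb]
    | smul r a _ ha => rw [mul_smul_comm, ha]
  have hone : u 1 = (1 : M) := by rw [← mul_one (u 1), huone 1]
  have hcinv : ∀ h : G, c h h⁻¹ = c h⁻¹ h := by
    intro h
    have := hcoc h h⁻¹ h
    simpa [hnorm.1, hnorm.2] using this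
  have hval : ∀ h : G, u h * ((((c h h⁻¹)⁻¹ : ℂˣ) : ℂ) • u h⁻¹) = 1 := by
    intro h
    rw [mul_smul_comm, hmul, smul_smul, ← Units.val_mul, inv_mul_cancel, Units.val_one,
      mul_inv_cancel, hone, one_smul]
  have hval' : ∀ h : G, ((((c h h⁻¹)⁻¹ : ℂˣ) : ℂ) • u h⁻¹) * u h = 1 := by
    intro h
    rw [smul_mul_assoc, hmul, smul_smul, hcinv h, ← Units.val_mul, inv_mul_cancel,
      Units.val_one, inv_mul_cancel, hone, one_smul]
  let U : G → Mˣ := fun h => ⟨u h, (((c h h⁻¹)⁻¹ : ℂˣ) : ℂ) • u h⁻¹, hval h, hval' h⟩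
  have hUcoe : ∀ h : G, ((U h : Mˣ) : M) = u h := fun h => rfl
  have hUmul : ∀ k h : G, U k * U h
      = (Units.map (algebraMap ℂ M).toMonoidHom (c k h)) * U (k * h) := by
    intro k h
    refine Units.ext ?_
    show u k * u h = algebraMap ℂ M ((c k h : ℂˣ) : ℂ) * u (k * h)
    rw [hmul, Algebra.smul_def]
  have hz : ∀ (r : ℂˣ) (x : M),
      ConjAct.toConjAct (Units.map (algebraMap ℂ M).toMonoidHom r) • x = x := by
    intro r x
    rw [ConjAct.units_smul_def]
    simp only [ConjAct.ofConjAct_toConjAct]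
    rw [← map_inv, Units.coe_map, Units.coe_map]
    simp only [RingHom.toMonoidHom_eq_coe, MonoidHom.coe_coe]
    rw [mul_assoc, ← Algebra.commutes, ← mul_assoc, ← map_mul, Units.mul_inv, map_one, one_mul]
  let t : G → M := fun h => ConjAct.toConjAct (U h) • u g
  have hconj : ∀ k : G, ∑ h : G, t h = ∑ h : G, ConjAct.toConjAct (U k) • t h := by
    intro k
    have : ∀ h : G, ConjAct.toConjAct (U k) • t h = t (k * h) := by
      intro h
      show ConjAct.toConjAct (U k) • ConjAct.toConjAct (U h) • u g = _
      rw [← mul_smul, ← map_mul, hUmul, map_mul, mul_smul, hz]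
    simp only [this]
    exact (Fintype.sum_equiv (Equiv.mulLeft k) _ _ (fun h => rfl)).symm
  have hbu : ∀ k : G, u k * (∑ h : G, t h) = (∑ h : G, t h) * u k := by
    intro k
    have h1 : ((U k : Mˣ) : M) * (∑ h : G, t h) * (((U k)⁻¹ : Mˣ) : M) = ∑ h : G, t h := by
      rw [Finset.mul_sum, Finset.sum_mul]
      calc (∑ h : G, ((U k : Mˣ) : M) * t h * (((U k)⁻¹ : Mˣ) : M))
          = ∑ h : G, ConjAct.toConjAct (U k) • t h := by
            refine Finset.sum_congr rfl fun h _ => ?_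
            rw [ConjAct.units_smul_def, ConjAct.ofConjAct_toConjAct]
        _ = ∑ h : G, t h := (hconj k).symm
    have h2 : ((U k : Mˣ) : M) * (∑ h : G, t h) = (∑ h : G, t h) * ((U k : Mˣ) : M) := by
      conv_rhs => rw [← h1]
      rw [mul_assoc, mul_assoc, Units.inv_mul, mul_one]
    rw [← hUcoe k]
    exact h2
  have hbcen : (∑ h : G, t h) ∈ Subalgebra.center ℂ M := by
    rw [Subalgebra.mem_center_iff]
    intro x
    induction hspan x using Submodule.span_induction with
    | mem y hy => obtain ⟨k, rfl⟩ := hy; exact hbu k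
    | zero => rw [mul_zero, zero_mul]
    | add a b _ _ ha hb => rw [add_mul, mul_add, ha, hb]
    | smul r a _ ha => rw [smul_mul_assoc, mul_smul_comm, ha]
  obtain ⟨r, hr⟩ := Algebra.mem_bot.1 (Algebra.IsCentral.out hbcen)
  -- expansion of t h
  let γ : G → ℂ := fun h => ((c h g : ℂˣ) : ℂ) * ((c (h * g) h⁻¹ : ℂˣ) : ℂ)
      * (((c h h⁻¹)⁻¹ : ℂˣ) : ℂ)
  have ht_eq : ∀ h : G, t h = γ h • u (h * g * h⁻¹) := by
    intro h
    show ((U h : Mˣ) : M) * u g * (((U h)⁻¹ : Mˣ) : M) = _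
    have hinv : (((U h)⁻¹ : Mˣ) : M) = (((c h h⁻¹)⁻¹ : ℂˣ) : ℂ) • u h⁻¹ := rfl
    rw [hinv, hUcoe, hmul, smul_mul_assoc, mul_smul_comm, hmul, smul_smul, smul_smul]
    congr 1
    ring
  have hγ1 : ∀ h : G, g * h = h * g → γ h = 1 := by
    intro h hcm
    have hσ : h * g * h⁻¹ = g := by rw [← hcm, mul_inv_cancel_right]
    have htg : t h = u g := by
      show ((U h : Mˣ) : M) * u g * (((U h)⁻¹ : Mˣ) : M) = u g
      have hcomm' : u h * u g = u g * u h := by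
        rw [hmul h g, hmul g h, hcon h hcm, hcm]
      rw [hUcoe, hcomm', ← hUcoe h, mul_assoc, Units.mul_inv, mul_one]
    have := (ht_eq h).symm.trans htg
    rw [hσ] at this
    have h2 : (γ h - 1) • u g = 0 := by rw [sub_smul, one_smul, this, sub_self]
    rcases smul_eq_zero.1 h2 with h3 | h3
    · exact sub_eq_zero.1 h3
    · exact absurd h3 (hLI.ne_zero g)
  -- expand b in the basis and extract the coefficient at g
  have hexp : ∑ h : G, t h
      = ∑ x : G, (∑ h : G, if x = h * g * h⁻¹ then γ h else 0) • u x := by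
    have hpush : ∀ x : G, (∑ h : G, if x = h * g * h⁻¹ then γ h else 0) • u x
        = ∑ h : G, (if x = h * g * h⁻¹ then γ h • u x else 0) := by
      intro x
      rw [Finset.sum_smul]
      exact Finset.sum_congr rfl fun h _ => by split <;> simp
    simp only [hpush]
    rw [Finset.sum_comm]
    refine Finset.sum_congr rfl fun h _ => ?_
    rw [ht_eq h, Finset.sum_ite_eq' Finset.univ (h * g * h⁻¹) (fun x => γ h • u x),
      if_pos (Finset.mem_univ _)]
  have hzero : ∑ x : G,
      ((∑ h : G, if x = h * g * h⁻¹ then γ h else 0) - (if x = 1 then r else 0)) • u x = 0 := by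
    simp only [sub_smul, Finset.sum_sub_distrib]
    rw [← hexp]
    have h1 : ∑ x : G, (if x = (1 : G) then r else 0) • u x = r • u 1 := by
      have : ∀ x : G, (if x = (1 : G) then r else 0) • u x
          = (if x = (1 : G) then r • u x else 0) := fun x => by split <;> simp
      simp only [this]
      rw [Finset.sum_ite_eq' Finset.univ (1 : G) (fun x => r • u x), if_pos (Finset.mem_univ _)]
    rw [h1, sub_eq_zero, ← hr, Algebra.algebraMap_eq_smul_one, hone]
  have hfg := Fintype.linearIndependent_iff.1 hLI _ hzero g
  simp only [if_neg hg, sub_zero] at hfg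
  have hsum : (∑ h : G, if g = h * g * h⁻¹ then γ h else 0)
      = ((Finset.univ.filter fun h : G => g = h * g * h⁻¹).card : ℂ) := by
    rw [← Finset.sum_boole]
    refine Finset.sum_congr rfl fun h _ => ?_
    by_cases hh : g = h * g * h⁻¹
    · rw [if_pos hh, if_pos hh, hγ1 h (mul_inv_eq_iff_eq_mul.1 hh.symm).symm]
    · rw [if_neg hh, if_neg hh]
  rw [hsum] at hfg
  have hcard : (Finset.univ.filter fun h : G => g = h * g * h⁻¹).card ≠ 0 := by
    refine Finset.card_ne_zero_of_mem (a := (1 : G)) ?_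
    simp
  exact hcard (Nat.cast_eq_zero.1 hfg)


section CenterAux

variable {G : Type*} [Group G]

lemma cKK_coe (c : G → G → ℂˣ) (g h : G) :
    ((cKK c g h : (KK G)ˣ) : KK G) = iotaC G ((c g h : ℂˣ) : ℂ) := rfl

lemma cKK_cocycle {c : G → G → ℂˣ} (hc : IsCocycle c) : IsCocycle (cKK c) := by
  intro g h k
  unfold cKK
  rw [← map_mul, ← map_mul, hc g h k]

lemma cKK_one_left {c : G → G → ℂˣ} (hn : IsNormalized c) (g : G) : cKK c 1 g = 1 := by
  unfold cKK; rw [hn.1 g, map_one]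

lemma cKK_one_right {c : G → G → ℂˣ} (hn : IsNormalized c) (g : G) : cKK c g 1 = 1 := by
  unfold cKK; rw [hn.2 g, map_one]

/-- The coefficient of the monomial `∏ t_{i_j g_j} u_{g_j}` in the twisted basis. -/
def cf (c : G → G → ℂˣ) : List (ℕ × G) → KK G
  | [] => 1
  | p :: l => tVar G p * ((cKK c p.2 (l.map Prod.snd).prod : (KK G)ˣ) : KK G) * cf c l

lemma cf_nil (c : G → G → ℂˣ) : cf c ([] : List (ℕ × G)) = 1 := rfl

lemma cf_cons (c : G → G → ℂˣ) (p : ℕ × G) (l : List (ℕ × G)) :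
    cf c (p :: l) = tVar G p * ((cKK c p.2 (l.map Prod.snd).prod : (KK G)ˣ) : KK G) * cf c l :=
  rfl

lemma cf_append {c : G → G → ℂˣ} (hc : IsCocycle c) (hn : IsNormalized c)
    (l₁ l₂ : List (ℕ × G)) :
    cf c (l₁ ++ l₂) = cf c l₁ * cf c l₂ *
      ((cKK c (l₁.map Prod.snd).prod (l₂.map Prod.snd).prod : (KK G)ˣ) : KK G) := by
  induction l₁ with
  | nil =>
      simp [cf_nil, cKK_one_left hn]
  | cons p l ih =>
      have hcoc := congrArg (fun z : (KK G)ˣ => (z : KK G))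
        (cKK_cocycle hc p.2 (l.map Prod.snd).prod (l₂.map Prod.snd).prod)
      simp only [Units.val_mul] at hcoc
      simp only [List.cons_append, cf_cons, List.map_append, List.prod_append, List.map_cons,
        List.prod_cons, ih]
      first
      | linear_combination (tVar G p * cf c l * cf c l₂) * hcoc
      | linear_combination (-(tVar G p * cf c l * cf c l₂)) * hcoc

lemma cf_mem_kSmall (c : G → G → ℂˣ) : ∀ l : List (ℕ × G), cf c l ∈ kSmall c := by
  intro l
  induction l with
  | nil => exact one_mem _
  | cons p l ih =>
      refine mul_mem (mul_mem ?_ ?_) ih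
      · exact Subfield.subset_closure (Or.inl ⟨p, rfl⟩)
      · exact Subfield.subset_closure (Or.inr ⟨p.2, _, rfl⟩)

lemma iotaC_cExt_mem (c : G → G → ℂˣ) (L : List G) :
    iotaC G ((cExt c L : ℂˣ) : ℂ) ∈ kSmall c := by
  induction L with
  | nil => simp only [cExt, Units.val_one, map_one]; exact one_mem _
  | cons g L ih =>
      show iotaC G ((cExt c (g :: L) : ℂˣ) : ℂ) ∈ kSmall c
      rw [show cExt c (g :: L) = c g L.prod * cExt c L from rfl, Units.val_mul, map_mul]
      refine mul_mem ?_ ih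
      exact Subfield.subset_closure (Or.inr ⟨g, L.prod, rfl⟩)

lemma QmuK_le_kSmall (c : G → G → ℂˣ) : QmuK c ≤ kSmall c := by
  refine Subfield.closure_le.2 ?_
  rintro x ⟨w, ⟨Z₁, Z₂, _, rfl⟩, rfl⟩
  unfold elemCoeff
  rw [Units.val_mul, map_mul]
  refine mul_mem (iotaC_cExt_mem c _) ?_
  rw [Units.val_inv_eq_inv_val, map_inv₀]
  exact Subfield.inv_mem _ (iotaC_cExt_mem c _)

lemma tVar_ne_zero (G : Type*) (p : ℕ × G) : tVar G p ≠ 0 := (tUnit G p).ne_zero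

lemma iotaC_inj (G : Type*) : Function.Injective (iotaC G) := (iotaC G).injective

/-- The `ℚ(μ)`-span of the coefficients of monomials of degree `g`. -/
def cfSpan (c : G → G → ℂˣ) (g : G) : Submodule (QmuK c) (KK G) :=
  Submodule.span (QmuK c) {x | ∃ l : List (ℕ × G), (l.map Prod.snd).prod = g ∧ x = cf c l}

lemma cfSpan_mul_cf {c : G → G → ℂˣ} (hc : IsCocycle c) (hn : IsNormalized c) {h : G}
    {y : KK G} (hy : y ∈ cfSpan c h) (l₁ : List (ℕ × G)) :
    cf c l₁ * y * ((cKK c (l₁.map Prod.snd).prod h : (KK G)ˣ) : KK G)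
      ∈ cfSpan c ((l₁.map Prod.snd).prod * h) := by
  induction hy using Submodule.span_induction with
  | mem y hym =>
      obtain ⟨l₂, hl₂, rfl⟩ := hym
      refine Submodule.subset_span ⟨l₁ ++ l₂, ?_, ?_⟩
      · rw [List.map_append, List.prod_append, hl₂]
      · rw [cf_append hc hn, hl₂]
  | zero => rw [mul_zero, zero_mul]; exact zero_mem _
  | add y z _ _ hy' hz' =>
      have hexp : cf c l₁ * (y + z) * ((cKK c (l₁.map Prod.snd).prod h : (KK G)ˣ) : KK G)
          = cf c l₁ * y * ((cKK c (l₁.map Prod.snd).prod h : (KK G)ˣ) : KK G)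
            + cf c l₁ * z * ((cKK c (l₁.map Prod.snd).prod h : (KK G)ˣ) : KK G) := by ring
      rw [hexp]
      exact add_mem hy' hz'
  | smul q y _ hy' =>
      have hexp : cf c l₁ * (q • y) * ((cKK c (l₁.map Prod.snd).prod h : (KK G)ˣ) : KK G)
          = q • (cf c l₁ * y * ((cKK c (l₁.map Prod.snd).prod h : (KK G)ˣ) : KK G)) := by
        show cf c l₁ * ((q : KK G) * y) * _ = (q : KK G) * (cf c l₁ * y * _)
        ring
      rw [hexp]
      exact Submodule.smul_mem _ _ hy'

lemma cfSpan_mul {c : G → G → ℂˣ} (hc : IsCocycle c) (hn : IsNormalized c) {g h : G}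
    {x y : KK G} (hx : x ∈ cfSpan c g) (hy : y ∈ cfSpan c h) :
    x * y * ((cKK c g h : (KK G)ˣ) : KK G) ∈ cfSpan c (g * h) := by
  induction hx using Submodule.span_induction with
  | mem x hxm =>
      obtain ⟨l₁, hl₁, rfl⟩ := hxm
      have := cfSpan_mul_cf hc hn hy l₁
      rw [hl₁] at this
      exact this
  | zero => rw [zero_mul, zero_mul]; exact zero_mem _
  | add x z _ _ hx' hz' =>
      have hexp : (x + z) * y * ((cKK c g h : (KK G)ˣ) : KK G)
          = x * y * ((cKK c g h : (KK G)ˣ) : KK G)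
            + z * y * ((cKK c g h : (KK G)ˣ) : KK G) := by ring
      rw [hexp]
      exact add_mem hx' hz'
  | smul q x _ hx' =>
      have hexp : (q • x) * y * ((cKK c g h : (KK G)ˣ) : KK G)
          = q • (x * y * ((cKK c g h : (KK G)ˣ) : KK G)) := by
        show ((q : KK G) * x) * y * _ = (q : KK G) * (x * y * _)
        ring
      rw [hexp]
      exact Submodule.smul_mem _ _ hx'

lemma cfSpan_mem_kSmall (c : G → G → ℂˣ) {g : G} {x : KK G} (hx : x ∈ cfSpan c g) :
    x ∈ kSmall c := by
  induction hx using Submodule.span_induction with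
  | mem y hym => obtain ⟨l, _, rfl⟩ := hym; exact cf_mem_kSmall c l
  | zero => exact zero_mem _
  | add y z _ _ hy hz => exact add_mem hy hz
  | smul q y _ hy =>
      show (q : KK G) * y ∈ kSmall c
      exact mul_mem (QmuK_le_kSmall c q.2) hy

end CenterAux

set_option maxHeartbeats 2000000 in
set_option synthInstance.maxHeartbeats 1000000 in
/-- Let `G` be a finite group of central type with nondegenerate
normalized 2-cocycle `c`, and let `Ū` be the generic graded algebra, i.e. the
`ℚ(μ)`-subalgebra of `k^c G` generated by the elements `t_{ig} u_g`.  Then the center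
`Z̄` of `Ū` is the `ℚ(μ)`-subalgebra generated by the monomials
`t_{i₁g₁}u_{g₁} ⋯ t_{i_mg_m}u_{g_m}` with `g₁⋯g_m = 1`; moreover `Z̄ ⊆ k`, so `Z̄`
is an integral domain. -/
theorem center_of_generic_algebra
    {G : Type*} [Group G] [Fintype G] (c : G → G → ℂˣ) (hc : IsNondeg c)
    (hnorm : IsNormalized c)
    {A : Type*} [Ring A] [Algebra (KK G) A]
    (u : G → A) (hu : IsTwistedBasis (KK G) (cKK c) u) (hone : u 1 = 1) :
    ZUbar c u =
        (Subring.closure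
          ((algebraMap (KK G) A '' ((QmuK c : Subfield (KK G)) : Set (KK G))) ∪ Mon1 u) :
            Subring A) ∧
      ZUbar c u ⊆ algebraMap (KK G) A '' ((kSmall c : Subfield (KK G)) : Set (KK G)) ∧
      ∀ a ∈ ZUbar c u, ∀ b ∈ ZUbar c u, a * b = 0 → a = 0 ∨ b = 0 := by
  classical
  obtain ⟨hLI, hsp, hmulu⟩ := hu
  -- the twisted basis as a `Basis`
  let B : Module.Basis G (KK G) A := Module.Basis.mk hLI hsp.ge
  have hB : ∀ g : G, B g = u g := fun g => Module.Basis.mk_apply hLI hsp.ge g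
  have hrepr_u : ∀ g k : G, B.repr (u g) k = if g = k then 1 else 0 := by
    intro g k
    rw [← hB g, B.repr_self, Finsupp.single_apply]
  have hexp : ∀ a : A, a = ∑ g : G, B.repr a g • u g := by
    intro a
    have h := B.sum_equivFun a
    simp only [Module.Basis.equivFun_apply, hB] at h
    exact h.symm
  have hss : ∀ (x y : KK G) (z : A), x • y • z = (x * y) • z := fun x y z => smul_smul x y z
  have h1s : ∀ z : A, (1 : KK G) • z = z := fun z => one_smul (KK G) z
  have h0s : ∀ z : A, (0 : KK G) • z = (0 : A) := fun z => zero_smul (KK G) z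
  have hsma : ∀ (x : KK G) (z w : A), (x • z) * w = x • (z * w) := fun x z w =>
    smul_mul_assoc x z w
  have hmsc : ∀ (x : KK G) (z w : A), z * (x • w) = x • (z * w) := fun x z w =>
    mul_smul_comm x z w
  have hreprsmul : ∀ (x : KK G) (z : A) (k : G), B.repr (x • z) k = x * B.repr z k := by
    intro x z k
    have h : B.repr (x • z) = x • (B.repr z) := map_smul _ _ _
    rw [h, Finsupp.smul_apply, smul_eq_mul]
  have hrepr_sum : ∀ (f : G → KK G) (v : G → G) (k : G),
      B.repr (∑ g : G, f g • u (v g)) k = ∑ g : G, if v g = k then f g else 0 := by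
    intro f v k
    rw [map_sum, Finsupp.finset_sum_apply]
    refine Finset.sum_congr rfl fun g _ => ?_
    rw [hreprsmul, hrepr_u, mul_ite, mul_one, mul_zero]
  have hmul_expand : ∀ a b : A, a * b
      = ∑ g : G, ∑ h : G,
        (B.repr a g * B.repr b h * ((cKK c g h : (KK G)ˣ) : KK G)) • u (g * h) := by
    intro a b
    conv_lhs => rw [hexp a, hexp b]
    rw [Finset.sum_mul]
    refine Finset.sum_congr rfl fun g _ => ?_
    rw [Finset.mul_sum]
    refine Finset.sum_congr rfl fun h _ => ?_
    rw [hsma, hmsc, hmulu g h, hss, hss]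
  have hrepr_mul : ∀ a b : A, ∀ k : G, B.repr (a * b) k
      = ∑ g : G, ∑ h : G, (if g * h = k then
          B.repr a g * B.repr b h * ((cKK c g h : (KK G)ˣ) : KK G) else 0) := by
    intro a b k
    rw [hmul_expand a b, map_sum, Finsupp.finset_sum_apply]
    refine Finset.sum_congr rfl fun g _ => ?_
    rw [map_sum, Finsupp.finset_sum_apply]
    refine Finset.sum_congr rfl fun h _ => ?_
    rw [hreprsmul, hrepr_u, mul_ite, mul_one, mul_zero]
  -- every element of `Ū` has all its coordinates in the corresponding `cfSpan`
  have hUD : ∀ a : A, a ∈ Ubar c u → ∀ k : G, B.repr a k ∈ cfSpan c k := by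
    intro a ha
    induction ha using Subring.closure_induction with
    | mem x hx =>
        rcases hx with ⟨q, hq, rfl⟩ | ⟨p, rfl⟩
        · intro k
          have hx1 : algebraMap (KK G) A q = q • u 1 := by
            rw [Algebra.algebraMap_eq_smul_one, ← hone]
          rw [hx1, hreprsmul, hrepr_u, mul_ite, mul_one, mul_zero]
          by_cases hk : (1 : G) = k
          · rw [if_pos hk, ← hk]
            have h1 : (1 : KK G) ∈ cfSpan c (1 : G) :=
              Submodule.subset_span ⟨[], by simp, rfl⟩
            have h2 := Submodule.smul_mem (cfSpan c (1 : G)) ⟨q, hq⟩ h1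
            have h3 : (⟨q, hq⟩ : QmuK c) • (1 : KK G) = q := by
              show q * 1 = q
              exact mul_one q
            rwa [h3] at h2
          · rw [if_neg hk]; exact zero_mem _
        · intro k
          have hx1 : genGen u p = tVar G p • u p.2 := rfl
          rw [hx1, hreprsmul, hrepr_u, mul_ite, mul_one, mul_zero]
          by_cases hk : p.2 = k
          · rw [if_pos hk, ← hk]
            refine Submodule.subset_span ⟨[p], by simp, ?_⟩
            rw [cf_cons, cf_nil]
            simp [cKK_one_right hnorm]
          · rw [if_neg hk]; exact zero_mem _
    | zero => intro k; rw [map_zero]; simp only [Finsupp.coe_zero, Pi.zero_apply]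
              exact zero_mem _
    | one =>
        intro k
        rw [← hone, hrepr_u]
        by_cases hk : (1 : G) = k
        · rw [if_pos hk, ← hk]
          exact Submodule.subset_span ⟨[], by simp, rfl⟩
        · rw [if_neg hk]; exact zero_mem _
    | add x y _ _ hx hy =>
        intro k
        rw [map_add, Finsupp.add_apply]
        exact add_mem (hx k) (hy k)
    | neg x _ hx =>
        intro k
        rw [map_neg, Finsupp.neg_apply]
        exact neg_mem (hx k)
    | mul x y _ _ hx hy =>
        intro k
        rw [hrepr_mul x y k]
        refine Submodule.sum_mem _ fun g _ => Submodule.sum_mem _ fun h _ => ?_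
        by_cases hgh : g * h = k
        · rw [if_pos hgh, ← hgh]
          exact cfSpan_mul hc.1 hnorm (hx g) (hy h)
        · rw [if_neg hgh]; exact zero_mem _
  -- products of generators
  have hprod : ∀ l : List (ℕ × G),
      (l.map (genGen u)).prod = cf c l • u ((l.map Prod.snd).prod) := by
    intro l
    induction l with
    | nil =>
        show (1 : A) = cf c [] • u 1
        rw [cf_nil, h1s, hone]
    | cons p l ih =>
        rw [List.map_cons, List.prod_cons, ih, List.map_cons, List.prod_cons, cf_cons]
        show (tVar G p • u p.2) * _ = _
        rw [hsma, hmsc, hmulu, hss, hss]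
        try (congr 1; ring)
  have hgen_in_U : ∀ p : ℕ × G, genGen u p ∈ Ubar c u := fun p =>
    Subring.subset_closure (Or.inr ⟨p, rfl⟩)
  have hmon_eq : ∀ l : List (ℕ × G), (l.map Prod.snd).prod = 1 →
      (l.map (genGen u)).prod = algebraMap (KK G) A (cf c l) := by
    intro l hl
    rw [hprod l, hl, hone, Algebra.algebraMap_eq_smul_one]
  -- the key representation of central elements
  have hmain : ∀ a : A, a ∈ ZUbar c u →
      B.repr a 1 ∈ cfSpan c 1 ∧ a = algebraMap (KK G) A (B.repr a 1) := by
    intro a ha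
    obtain ⟨haU, haC⟩ := ha
    have hau : ∀ g : G, a * u g = u g * a := by
      intro g
      have h1 := haC (genGen u (0, g)) (hgen_in_U (0, g))
      have h2 : genGen u (0, g) = tVar G (0, g) • u g := rfl
      rw [h2, hmsc, hsma] at h1
      have ht := tVar_ne_zero G (0, g)
      have h3 : (tVar G (0, g))⁻¹ • (tVar G (0, g) • (a * u g))
          = (tVar G (0, g))⁻¹ • (tVar G (0, g) • (u g * a)) := by rw [h1]
      rw [hss, hss, inv_mul_cancel₀ ht, h1s, h1s] at h3
      exact h3
    have hcent : ∀ g : G, g ≠ 1 → B.repr a g = 0 := by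
      intro g₀ hg₀
      obtain ⟨h, hcm, hne⟩ := nondeg_comb hc hnorm g₀ hg₀
      have hKne : ((cKK c g₀ h : (KK G)ˣ) : KK G) ≠ ((cKK c h g₀ : (KK G)ˣ) : KK G) := by
        intro heq
        rw [cKK_coe, cKK_coe] at heq
        exact hne (Units.ext (iotaC_inj G heq))
      have e1 : a * u h = ∑ g : G,
          (B.repr a g * ((cKK c g h : (KK G)ˣ) : KK G)) • u (g * h) := by
        conv_lhs => rw [hexp a]
        rw [Finset.sum_mul]
        refine Finset.sum_congr rfl fun g _ => ?_
        rw [hsma, hmulu, hss]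
      have e2 : u h * a = ∑ g : G,
          (B.repr a g * ((cKK c h g : (KK G)ˣ) : KK G)) • u (h * g) := by
        conv_lhs => rw [hexp a]
        rw [Finset.mul_sum]
        refine Finset.sum_congr rfl fun g _ => ?_
        rw [hmsc, hmulu, hss]
      have e3 : B.repr (a * u h) (g₀ * h) = B.repr (u h * a) (g₀ * h) := by rw [hau h]
      rw [e1, e2, hrepr_sum _ (fun g => g * h) (g₀ * h),
        hrepr_sum _ (fun g => h * g) (g₀ * h)] at e3
      have c1 : (∑ g : G, if g * h = g₀ * h then
          B.repr a g * ((cKK c g h : (KK G)ˣ) : KK G) else 0)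
          = B.repr a g₀ * ((cKK c g₀ h : (KK G)ˣ) : KK G) := by
        rw [Finset.sum_congr rfl (fun g _ => by rw [show (g * h = g₀ * h) = (g = g₀) from
          propext (mul_left_inj h)]),
          Finset.sum_ite_eq' Finset.univ g₀
            (fun g => B.repr a g * ((cKK c g h : (KK G)ˣ) : KK G)),
          if_pos (Finset.mem_univ _)]
      have c2 : (∑ g : G, if h * g = g₀ * h then
          B.repr a g * ((cKK c h g : (KK G)ˣ) : KK G) else 0)
          = B.repr a g₀ * ((cKK c h g₀ : (KK G)ˣ) : KK G) := by
        rw [Finset.sum_congr rfl (fun g _ => by rw [show (h * g = g₀ * h) = (g = g₀) from by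
          rw [hcm]; exact propext (mul_right_inj h)]),
          Finset.sum_ite_eq' Finset.univ g₀
            (fun g => B.repr a g * ((cKK c h g : (KK G)ˣ) : KK G)),
          if_pos (Finset.mem_univ _)]
      rw [c1, c2] at e3
      by_contra hr0
      exact hKne (mul_left_cancel₀ hr0 e3)
    have harep : a = algebraMap (KK G) A (B.repr a 1) := by
      conv_lhs => rw [hexp a]
      rw [Finset.sum_eq_single (1 : G)
        (fun g _ hg => by rw [hcent g hg, h0s])
        (fun h => absurd (Finset.mem_univ 1) h), hone,
        ← Algebra.algebraMap_eq_smul_one]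
    exact ⟨hUD a haU 1, harep⟩
  -- span elements give members of the closure
  have hMm1 : ∀ x : KK G, x ∈ cfSpan c 1 → algebraMap (KK G) A x ∈
      (Subring.closure
        ((algebraMap (KK G) A '' ((QmuK c : Subfield (KK G)) : Set (KK G))) ∪ Mon1 u) :
          Subring A) := by
    intro x hx
    induction hx using Submodule.span_induction with
    | mem y hym =>
        obtain ⟨l, hl, rfl⟩ := hym
        exact Subring.subset_closure (Or.inr ⟨l, hl, (hmon_eq l hl).symm⟩)
    | zero => rw [map_zero]; exact zero_mem _
    | add y z _ _ hy hz => rw [map_add]; exact add_mem hy hz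
    | smul q y _ hy =>
        have : (q • y) = (q : KK G) * y := rfl
        rw [this, map_mul]
        exact mul_mem (Subring.subset_closure (Or.inl ⟨(q : KK G), q.2, rfl⟩)) hy
  have hinj : Function.Injective (algebraMap (KK G) A) := by
    have : Nontrivial A := ⟨⟨1, 0, by rw [← hone]; exact hLI.ne_zero 1⟩⟩
    exact (algebraMap (KK G) A).injective
  have hsub2 : ∀ a : A, a ∈ (Subring.closure
      ((algebraMap (KK G) A '' ((QmuK c : Subfield (KK G)) : Set (KK G))) ∪ Mon1 u) :
        Subring A) → a ∈ Ubar c u ∧ ∀ b ∈ Ubar c u, a * b = b * a := by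
    intro a ha'
    induction ha' using Subring.closure_induction with
    | mem x hx =>
        rcases hx with ⟨q, hq, rfl⟩ | ⟨l, hl, rfl⟩
        · exact ⟨Subring.subset_closure (Or.inl ⟨q, hq, rfl⟩),
            fun b _ => Algebra.commutes q b⟩
        · constructor
          · refine Subring.list_prod_mem _ fun y hy => ?_
            obtain ⟨p, -, rfl⟩ := List.mem_map.1 hy
            exact hgen_in_U p
          · intro b _
            rw [hmon_eq l hl]
            exact Algebra.commutes _ b
    | zero => exact ⟨zero_mem _, fun b _ => by rw [zero_mul, mul_zero]⟩
    | one => exact ⟨one_mem _, fun b _ => by rw [one_mul, mul_one]⟩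
    | add x y _ _ hx hy =>
        exact ⟨add_mem hx.1 hy.1, fun b hb => by
          rw [add_mul, mul_add, hx.2 b hb, hy.2 b hb]⟩
    | neg x _ hx =>
        exact ⟨neg_mem hx.1, fun b hb => by
          rw [neg_mul, mul_neg, hx.2 b hb]⟩
    | mul x y _ _ hx hy =>
        exact ⟨mul_mem hx.1 hy.1, fun b hb => by
          rw [mul_assoc, hy.2 b hb, ← mul_assoc, hx.2 b hb, mul_assoc]⟩
  refine ⟨?_, ?_, ?_⟩
  · apply Set.Subset.antisymm
    · intro a ha
      obtain ⟨hx, harep⟩ := hmain a ha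
      have := hMm1 _ hx
      rw [← harep] at this
      exact this
    · intro a ha
      exact hsub2 a ha
  · intro a ha
    obtain ⟨hx, harep⟩ := hmain a ha
    exact ⟨B.repr a 1, cfSpan_mem_kSmall c hx, harep.symm⟩
  · intro a ha b hb hab
    obtain ⟨-, harep⟩ := hmain a ha
    obtain ⟨-, hbrep⟩ := hmain b hb
    rw [harep, hbrep, ← map_mul] at hab
    have h0 : B.repr a 1 * B.repr b 1 = 0 := hinj (by rw [hab, map_zero])
    rcases mul_eq_zero.1 h0 with h | h
    · left; rw [harep, h, map_zero]
    · right; rw [hbrep, h, map_zero]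

end Paper
end
end

section
/- Let G be a finite group of central type with nondegenerate 2-cocycle c, s the generic cocycle, S = Q(μ)[Y], and let L be a subfield of C containing Q(μ). If φ : S → L is a Q(μ)-algebra homomorphism and β(g,h) = φ(s(g,h)), then β is a 2-cocycle cohomologous to c over C, φ induces a G-graded homomorphism S^sG → L^βG, and L^βG is a G-graded form of C^cG. Conversely, if L^βG is a G-graded form of C^cG then there is a Q(μ)-algebra homomorphism φ : S → L such that γ = φ∘s is a cocycle cohomologous to β over L, and φ induces a homomorphism from S^sG onto φ(S)^γG, a G-graded form of L^βG. -/
open scoped BigOperators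

set_option synthInstance.maxHeartbeats 1000000
set_option maxHeartbeats 1000000

noncomputable section

namespace Paper

/-- View an `(↥L)ˣ`-valued 2-cochain on `G` as a `ℂˣ`-valued one, `L ⊆ ℂ` a subfield. -/
def upC {G : Type*} {L : Subfield ℂ} (β : G → G → (↥L)ˣ) : G → G → ℂˣ := fun g h =>
  Units.map (L.subtype : ↥L →+* ℂ).toMonoidHom (β g h)

/-- A `G`-graded form over `L ⊆ ℂ` of the `G`-graded algebra `ℂ^c G`: an `L`-algebra with
a twisted basis for some `L`-valued 2-cocycle `γ` which is cohomologous to `c` over `ℂ`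
(so that `B ⊗_L ℂ ≅ ℂ^c G` as `G`-graded algebras). -/
def IsGradedForm (L : Subfield ℂ) {G : Type*} [Group G] (c : G → G → ℂˣ)
    (B : Type*) [Ring B] [Algebra ↥L B] : Prop :=
  ∃ (γ : G → G → (↥L)ˣ) (w : G → B),
    IsCocycle (upC γ) ∧ IsTwistedBasis ↥L γ w ∧ Cohomologous (upC γ) c
section AuxA
open Finsupp
variable {G : Type*} [Group G]

/-- flatten a list of pairs -/
def flat2 : List (G × G) → List G
  | [] => []
  | p :: l => p.1 :: p.2 :: flat2 l

def m2 {G : Type*} [Group G] (p : G × G) : G := p.1 * p.2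

def ccm (c : G → G → ℂˣ) (p : G × G) : ℂˣ := c p.1 p.2

def wmap {G : Type*} [Group G] (p : G × G) : G →₀ ℤ :=
  Finsupp.single p.1 1 + Finsupp.single p.2 1 - Finsupp.single (m2 p) 1

lemma prod_flat2 (l : List (G × G)) : (flat2 l).prod = (l.map (m2 (G := G))).prod := by
  induction l with
  | nil => rfl
  | cons p l ih => simp [flat2, m2, ih, mul_assoc]

lemma coe_flat2 (l : List (G × G)) :
    (↑(flat2 l) : Multiset G) = ↑(l.map Prod.fst) + ↑(l.map Prod.snd) := by
  induction l with
  | nil => rfl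
  | cons p l ih =>
      show (↑(p.1 :: p.2 :: flat2 l) : Multiset G) = _
      simp only [List.map_cons, ← Multiset.cons_coe, ih, ← Multiset.singleton_add]
      ac_rfl

lemma cext_append {c : G → G → ℂˣ} (hcoc : Paper.IsCocycle c) (hn1 : ∀ g, c 1 g = 1)
    (l₁ l₂ : List G) :
    Paper.cExt c (l₁ ++ l₂) = c l₁.prod l₂.prod * Paper.cExt c l₁ * Paper.cExt c l₂ := by
  induction l₁ with
  | nil => simp [Paper.cExt, hn1]
  | cons g l₁ ih =>
      have key := hcoc g l₁.prod l₂.prod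
      rw [List.cons_append]
      show c g (l₁ ++ l₂).prod * Paper.cExt c (l₁ ++ l₂) = _
      rw [ih, List.prod_append, List.prod_cons]
      calc c g (l₁.prod * l₂.prod) * (c l₁.prod l₂.prod * Paper.cExt c l₁ * Paper.cExt c l₂)
          = (c l₁.prod l₂.prod * c g (l₁.prod * l₂.prod)) *
              (Paper.cExt c l₁ * Paper.cExt c l₂) := by ac_rfl
        _ = (c g l₁.prod * c (g * l₁.prod) l₂.prod) *
              (Paper.cExt c l₁ * Paper.cExt c l₂) := by rw [← key]
        _ = c (g * l₁.prod) l₂.prod * (c g l₁.prod * Paper.cExt c l₁) * Paper.cExt c l₂ := by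
              ac_rfl

lemma cext_flat2 {c : G → G → ℂˣ} (hcoc : Paper.IsCocycle c) (hn1 : ∀ g, c 1 g = 1)
    (l : List (G × G)) :
    Paper.cExt c (flat2 l) =
      (l.map (ccm c)).prod * Paper.cExt c (l.map (m2 (G := G))) := by
  induction l with
  | nil => simp [flat2, Paper.cExt]
  | cons p l ih =>
      have key := hcoc p.1 p.2 (l.map (m2 (G := G))).prod
      show Paper.cExt c (p.1 :: p.2 :: flat2 l) = _
      simp only [Paper.cExt, List.prod_cons, prod_flat2, List.map_cons, ih, ccm, m2]
      rw [show c p.1 (p.2 * (l.map (m2 (G:=G))).prod) *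
            (c p.2 (l.map (m2 (G:=G))).prod *
              ((l.map (ccm c)).prod * Paper.cExt c (l.map (m2 (G:=G)))))
          = (c p.2 (l.map (m2 (G:=G))).prod * c p.1 (p.2 * (l.map (m2 (G:=G))).prod)) *
              ((l.map (ccm c)).prod * Paper.cExt c (l.map (m2 (G:=G)))) by ac_rfl, ← key]
      ac_rfl

open scoped Classical in
lemma wsum_apply (l : List (G × G)) (x : G) :
    ((l.map (wmap (G := G))).sum) x =
      ((l.map Prod.fst : Multiset G).count x : ℤ) +
        ((l.map Prod.snd : Multiset G).count x : ℤ) -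
          ((l.map (m2 (G := G)) : Multiset G).count x : ℤ) := by
  induction l with
  | nil => simp
  | cons p l ih =>
      simp only [List.map_cons, List.sum_cons, Finsupp.add_apply, ih, wmap,
        Finsupp.sub_apply, Finsupp.single_apply, ← Multiset.cons_coe, Multiset.count_cons,
        eq_comm]
      split_ifs with h1 h2 h3 <;> push_cast <;> omega

open scoped Classical in
lemma lemB {c : G → G → ℂˣ} (hcoc : Paper.IsCocycle c) (hn1 : ∀ g, c 1 g = 1)
    (lP lN : List (G × G))
    (h : ((lP.map (wmap (G := G))).sum : G →₀ ℤ) = (lN.map (wmap (G := G))).sum) :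
    (lP.map (ccm c)).prod * ((lN.map (ccm c)).prod)⁻¹ ∈ Paper.muSet c := by
  have hcount : ∀ x : G,
      (↑(flat2 lP ++ lN.map (m2 (G := G))) : Multiset G).count x =
        (↑(lP.map (m2 (G := G)) ++ flat2 lN) : Multiset G).count x := by
    intro x
    have hx := DFunLike.congr_fun h x
    rw [wsum_apply, wsum_apply] at hx
    rw [← Multiset.coe_add, ← Multiset.coe_add, Multiset.count_add, Multiset.count_add,
      coe_flat2, coe_flat2, Multiset.count_add, Multiset.count_add]
    omega
  have hperm : (flat2 lP ++ lN.map (m2 (G := G))).Perm (lP.map (m2 (G := G)) ++ flat2 lN) :=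
    Multiset.coe_eq_coe.mp (Multiset.ext.mpr hcount)
  have hprod : (flat2 lP ++ lN.map (m2 (G := G))).prod =
      (lP.map (m2 (G := G)) ++ flat2 lN).prod := by
    simp [List.prod_append, prod_flat2]
  have hmap : ∀ l : List G, (l.map (fun g : G => ((0 : ℕ), g))).map Prod.snd = l := by
    intro l; simp [List.map_map, Function.comp_def]
  refine ⟨(flat2 lP ++ lN.map (m2 (G := G))).map (fun g => ((0 : ℕ), g)),
    (lP.map (m2 (G := G)) ++ flat2 lN).map (fun g => ((0 : ℕ), g)), ⟨hperm.map _, ?_⟩, ?_⟩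
  · rw [hmap, hmap, hprod]
  · have h1 : Paper.cExt c (flat2 lP ++ lN.map (m2 (G := G)))
        = c (lP.map (m2 (G := G))).prod (lN.map (m2 (G := G))).prod *
            ((lP.map (ccm c)).prod * Paper.cExt c (lP.map (m2 (G := G)))) *
              Paper.cExt c (lN.map (m2 (G := G))) := by
      rw [cext_append hcoc hn1, cext_flat2 hcoc hn1, prod_flat2]
    have h2 : Paper.cExt c (lP.map (m2 (G := G)) ++ flat2 lN)
        = c (lP.map (m2 (G := G))).prod (lN.map (m2 (G := G))).prod *
            Paper.cExt c (lP.map (m2 (G := G))) *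
              ((lN.map (ccm c)).prod * Paper.cExt c (lN.map (m2 (G := G)))) := by
      rw [cext_append hcoc hn1, cext_flat2 hcoc hn1, prod_flat2]
    simp only [Paper.elemCoeff, hmap]
    rw [h1, h2, ← div_eq_mul_inv, ← div_eq_mul_inv, div_eq_div_iff_mul_eq_mul]
    ac_rfl

end AuxA
section AuxB
open Finsupp Paper

noncomputable instance : RootableBy ℂˣ ℕ :=
  rootableByOfPowLeftSurj _ _ (fun {n} hn u => by
    obtain ⟨z, hz⟩ := IsAlgClosed.exists_pow_nat_eq (k := ℂ) (u : ℂ) (Nat.pos_of_ne_zero hn)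
    have hz0 : z ≠ 0 := by
      intro h0
      rw [h0, zero_pow hn] at hz
      exact u.ne_zero hz.symm
    exact ⟨Units.mk0 z hz0, Units.ext (by simpa using hz)⟩)

noncomputable instance : RootableBy ℂˣ ℤ := Group.rootableByIntOfRootableByNat ℂˣ

noncomputable instance : DivisibleBy (Additive ℂˣ) ℤ where
  div a n := Additive.ofMul (RootableBy.root a.toMul n)
  div_zero a := congrArg Additive.ofMul (RootableBy.root_zero a.toMul)
  div_cancel {n} a hn := by
    show n • Additive.ofMul (RootableBy.root a.toMul n) = a
    rw [← ofMul_zpow, RootableBy.root_cancel _ hn]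
    rfl

/-- Extension of homs into `Additive ℂˣ` along a map with bigger kernel. -/
lemma exists_extension {A B : Type*} [AddCommGroup A] [AddCommGroup B] (f : A →+ B)
    (d : A →+ Additive ℂˣ) (hker : ∀ a, f a = 0 → d a = 0) :
    ∃ E : B →+ Additive ℂˣ, ∀ a, E (f a) = d a := by
  obtain ⟨E, hE⟩ := (Module.Baer.of_divisible (Additive ℂˣ)).extension_property_addMonoidHom
    (QuotientAddGroup.kerLift f) (QuotientAddGroup.kerLift_injective f)
    (QuotientAddGroup.lift f.ker d (fun x hx => hker x hx))
  refine ⟨E, fun a => ?_⟩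
  have h1 := DFunLike.congr_fun hE (QuotientAddGroup.mk a)
  simp at h1; exact h1

variable {G : Type*} [Group G]

lemma tVar_ne (p : ℕ × G) : Paper.tVar G p ≠ 0 := (Paper.tUnit G p).ne_zero

lemma cKK_mul_apply (c : G → G → ℂˣ) (hc1 : Paper.IsCocycle c) (g h k : G) :
    Paper.cKK c g h * Paper.cKK c (g * h) k = Paper.cKK c h k * Paper.cKK c g (h * k) := by
  unfold Paper.cKK
  rw [← map_mul, ← map_mul, hc1 g h k]

lemma sKK_cocycle {c : G → G → ℂˣ} (hc1 : Paper.IsCocycle c) :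
    Paper.IsCocycle (Paper.sKK c) := by
  intro g h k
  have e1 : Paper.sKK c g h * Paper.sKK c (g * h) k
      = Paper.tU G g * Paper.tU G h * Paper.tU G k * (Paper.tU G (g * h * k))⁻¹ *
          (Paper.cKK c g h * Paper.cKK c (g * h) k) := by
    show (Paper.tU G g * Paper.tU G h * (Paper.tU G (g * h))⁻¹ * Paper.cKK c g h) *
        (Paper.tU G (g * h) * Paper.tU G k * (Paper.tU G (g * h * k))⁻¹ *
          Paper.cKK c (g * h) k) = _
    calc (Paper.tU G g * Paper.tU G h * (Paper.tU G (g * h))⁻¹ * Paper.cKK c g h) *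
        (Paper.tU G (g * h) * Paper.tU G k * (Paper.tU G (g * h * k))⁻¹ *
          Paper.cKK c (g * h) k)
        = Paper.tU G g * Paper.tU G h * Paper.tU G k * (Paper.tU G (g * h * k))⁻¹ *
            (Paper.cKK c g h * Paper.cKK c (g * h) k) *
              ((Paper.tU G (g * h))⁻¹ * Paper.tU G (g * h)) := by
            refine Additive.ofMul.injective ?_
            simp only [ofMul_mul, ofMul_inv]
            abel
      _ = _ := by rw [inv_mul_cancel, mul_one]
  have e2 : Paper.sKK c h k * Paper.sKK c g (h * k)
      = Paper.tU G g * Paper.tU G h * Paper.tU G k * (Paper.tU G (g * (h * k)))⁻¹ *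
          (Paper.cKK c h k * Paper.cKK c g (h * k)) := by
    show (Paper.tU G h * Paper.tU G k * (Paper.tU G (h * k))⁻¹ * Paper.cKK c h k) *
        (Paper.tU G g * Paper.tU G (h * k) * (Paper.tU G (g * (h * k)))⁻¹ *
          Paper.cKK c g (h * k)) = _
    calc (Paper.tU G h * Paper.tU G k * (Paper.tU G (h * k))⁻¹ * Paper.cKK c h k) *
        (Paper.tU G g * Paper.tU G (h * k) * (Paper.tU G (g * (h * k)))⁻¹ *
          Paper.cKK c g (h * k))
        = Paper.tU G g * Paper.tU G h * Paper.tU G k * (Paper.tU G (g * (h * k)))⁻¹ *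
            (Paper.cKK c h k * Paper.cKK c g (h * k)) *
              ((Paper.tU G (h * k))⁻¹ * Paper.tU G (h * k)) := by
            refine Additive.ofMul.injective ?_
            simp only [ofMul_mul, ofMul_inv]
            abel
      _ = _ := by rw [inv_mul_cancel, mul_one]
  rw [e1, e2, cKK_mul_apply c hc1 g h k, mul_assoc g h k]

lemma sKK_one_left {c : G → G → ℂˣ} (hn : ∀ g : G, c 1 g = 1) (g : G) :
    Paper.sKK c 1 g = Paper.tU G 1 := by
  unfold Paper.sKK Paper.cKK
  rw [hn g, map_one, mul_one, one_mul, mul_assoc, mul_inv_cancel, mul_one]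

lemma sKK_one_right {c : G → G → ℂˣ} (hn : ∀ g : G, c g 1 = 1) (g : G) :
    Paper.sKK c g 1 = Paper.tU G 1 := by
  unfold Paper.sKK Paper.cKK
  rw [hn g, map_one, mul_one, mul_one]
  calc Paper.tU G g * Paper.tU G 1 * (Paper.tU G g)⁻¹
      = Paper.tU G 1 * (Paper.tU G g * (Paper.tU G g)⁻¹) := by
        refine Additive.ofMul.injective ?_
        simp only [ofMul_mul, ofMul_inv]
        abel
    _ = Paper.tU G 1 := by rw [mul_inv_cancel, mul_one]

/-- membership of the generators in `S`. -/
lemma s_mem (c : G → G → ℂˣ) (g h : G) :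
    ((Paper.sKK c g h : (Paper.KK G)ˣ) : Paper.KK G) ∈ Paper.Ssub c :=
  Subring.subset_closure (Or.inl (Or.inr ⟨g, h, rfl⟩))

lemma sinv_mem (c : G → G → ℂˣ) (g h : G) :
    (((Paper.sKK c g h)⁻¹ : (Paper.KK G)ˣ) : Paper.KK G) ∈ Paper.Ssub c :=
  Subring.subset_closure (Or.inr ⟨g, h, rfl⟩)

lemma qmuK_le_Ssub (c : G → G → ℂˣ) {x : Paper.KK G} (hx : x ∈ Paper.QmuK c) :
    x ∈ Paper.Ssub c :=
  Subring.subset_closure (Or.inl (Or.inl hx))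

lemma iota_mu_mem (c : G → G → ℂˣ) {z : ℂˣ} (hz : z ∈ Paper.muSet c) :
    Paper.iotaC G ((z : ℂˣ) : ℂ) ∈ Paper.QmuK c :=
  Subfield.subset_closure ⟨z, hz, rfl⟩

end AuxB
section AuxC
open Finsupp

lemma ofMul_list_sum {M : Type*} [CommMonoid M] {α : Type*} (f : α → M) (l : List α) :
    ((l.map fun x => Additive.ofMul (f x)).sum) = Additive.ofMul ((l.map f).prod) := by
  induction l with
  | nil => rfl
  | cons a l ih => simp [ih]

lemma prod_map_inv' {M : Type*} [CommGroup M] {α : Type*} (f : α → M) (l : List α) :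
    (l.map fun x => (f x)⁻¹).prod = ((l.map f).prod)⁻¹ := by
  induction l with
  | nil => simp
  | cons a l ih => simp [ih, mul_inv, mul_comm]

variable {G : Type*} [Group G]

/-- The boundary homomorphism. -/
noncomputable def bd : ((G × G) →₀ ℤ) →+ (G →₀ ℤ) :=
  Finsupp.liftAddHom (fun p => zmultiplesHom _ (wmap p))

lemma bd_single (p : G × G) : bd (Finsupp.single p (1 : ℤ)) = wmap p := by
  rw [bd, Finsupp.liftAddHom_apply_single]
  exact one_zsmul _

/-- list-of-generators element. -/
noncomputable def FL (l : List (G × G)) : (G × G) →₀ ℤ :=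
  (l.map (fun p => Finsupp.single p (1 : ℤ))).sum

lemma map_FL {V : Type*} [AddCommMonoid V] (f : ((G × G) →₀ ℤ) →+ V) (l : List (G × G)) :
    f (FL l) = (l.map (fun p => f (Finsupp.single p (1 : ℤ)))).sum := by
  rw [FL, map_list_sum, List.map_map]
  rfl

lemma decomp (a : (G × G) →₀ ℤ) :
    ∃ lP lN : List (G × G), a = FL lP - FL lN := by
  induction a using Finsupp.induction_linear with
  | zero => exact ⟨[], [], by simp [FL]⟩
  | add f g hf hg =>
      obtain ⟨lPf, lNf, hf⟩ := hf
      obtain ⟨lPg, lNg, hg⟩ := hg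
      refine ⟨lPf ++ lPg, lNf ++ lNg, ?_⟩
      have hFL : ∀ l₁ l₂ : List (G × G), FL (l₁ ++ l₂) = FL l₁ + FL l₂ := by
        intro l₁ l₂
        rw [FL, FL, FL, List.map_append, List.sum_append]
      rw [hf, hg, hFL, hFL]
      abel
  | single p k =>
      rcases k with n | n
      · refine ⟨List.replicate n p, [], ?_⟩
        rw [FL, FL, List.map_replicate, List.sum_replicate]
        simp
      · refine ⟨[], List.replicate (n + 1) p, ?_⟩
        rw [FL, FL, List.map_replicate, List.sum_replicate]
        simp [Int.negSucc_eq]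

lemma bd_FL (l : List (G × G)) : bd (FL l) = (l.map (wmap (G := G))).sum := by
  rw [map_FL]
  congr 1
  exact List.map_congr_left (fun p _ => bd_single p)

/-- The `t`-part homomorphism. -/
noncomputable def TT : (G →₀ ℤ) →+ Additive (Paper.KK G)ˣ :=
  Finsupp.liftAddHom (fun g => zmultiplesHom _ (Additive.ofMul (Paper.tU G g)))

lemma TT_single (g : G) : TT (Finsupp.single g (1 : ℤ)) = Additive.ofMul (Paper.tU G g) := by
  rw [TT, Finsupp.liftAddHom_apply_single]
  exact one_zsmul _

lemma TT_wmap (p : G × G) :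
    Additive.toMul (TT (wmap p)) = Paper.tU G p.1 * Paper.tU G p.2 * (Paper.tU G (m2 p))⁻¹ := by
  rw [wmap, map_sub, map_add, TT_single, TT_single, TT_single, toMul_sub, toMul_add]
  simp [div_eq_mul_inv]

lemma prodS_eq (c : G → G → ℂˣ) (l : List (G × G)) :
    Additive.ofMul ((l.map (fun p => Paper.sKK c p.1 p.2)).prod)
      = TT ((l.map (wmap (G := G))).sum) +
          Additive.ofMul ((l.map (fun p => Paper.cKK c p.1 p.2)).prod) := by
  induction l with
  | nil => simp
  | cons p l ih =>
      have hp : Paper.sKK c p.1 p.2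
          = Additive.toMul (TT (wmap p)) * Paper.cKK c p.1 p.2 := by
        rw [TT_wmap]
        rfl
      simp only [List.map_cons, List.prod_cons, List.sum_cons, map_add]
      rw [ofMul_mul, ih, hp, ofMul_mul, ofMul_toMul]
      simp only [ofMul_mul]
      abel

lemma sval_prod (c : G → G → ℂˣ) (l : List (G × G)) :
    (((l.map (fun p => Paper.sKK c p.1 p.2)).prod : (Paper.KK G)ˣ) : Paper.KK G)
      = (l.map (fun p => ((Paper.sKK c p.1 p.2 : (Paper.KK G)ˣ) : Paper.KK G))).prod := by
  rw [show (((l.map (fun p => Paper.sKK c p.1 p.2)).prod : (Paper.KK G)ˣ) : Paper.KK G)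
      = Units.coeHom (Paper.KK G) ((l.map (fun p => Paper.sKK c p.1 p.2)).prod) from rfl,
    map_list_prod, List.map_map]
  rfl

lemma sprod_mem (c : G → G → ℂˣ) (l : List (G × G)) :
    ((l.map (fun p => ((Paper.sKK c p.1 p.2 : (Paper.KK G)ˣ) : Paper.KK G))).prod)
      ∈ Paper.Ssub c := by
  refine Subring.list_prod_mem _ ?_
  intro x hx
  obtain ⟨p, _, rfl⟩ := List.mem_map.mp hx
  exact s_mem c p.1 p.2

/-- The key specialization lemma: any multiplicative `ℚ(μ)`-fixing `φ` yields a
cobounding `lam` over `ℂ`. -/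
lemma forward3 (c : G → G → ℂˣ) (hc1 : Paper.IsCocycle c) (hn1 : ∀ g : G, c 1 g = 1)
    (φ : Paper.KK G → ℂ)
    (h2 : ∀ x ∈ Paper.Ssub c, ∀ y ∈ Paper.Ssub c, φ (x * y) = φ x * φ y)
    (h3 : φ 1 = 1)
    (h4 : ∀ x : ℂ, x ∈ Paper.Qmu c → φ (Paper.iotaC G x) = x) :
    ∃ lam : G → ℂˣ, ∀ g h : G,
      φ ((Paper.sKK c g h : (Paper.KK G)ˣ) : Paper.KK G) =
        ((lam g * lam h * (lam (g * h))⁻¹ * c g h : ℂˣ) : ℂ) := by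
  have hsne : ∀ g h : G, φ ((Paper.sKK c g h : (Paper.KK G)ˣ) : Paper.KK G) ≠ 0 := by
    intro g h hz
    have hmul := h2 _ (s_mem c g h) _ (sinv_mem c g h)
    rw [Units.mul_inv, h3, hz, zero_mul] at hmul
    exact one_ne_zero hmul
  have phi_prod : ∀ l : List (G × G),
      φ ((l.map (fun p => ((Paper.sKK c p.1 p.2 : (Paper.KK G)ˣ) : Paper.KK G))).prod)
        = (l.map (fun p =>
            φ ((Paper.sKK c p.1 p.2 : (Paper.KK G)ˣ) : Paper.KK G))).prod := by
    intro l
    induction l with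
    | nil => simpa using h3
    | cons p l ih =>
        simp only [List.map_cons, List.prod_cons]
        rw [h2 _ (s_mem c p.1 p.2) _ (sprod_mem c l), ih]
  set βU : G × G → ℂˣ := fun p =>
    Units.mk0 (φ ((Paper.sKK c p.1 p.2 : (Paper.KK G)ˣ) : Paper.KK G)) (hsne p.1 p.2) with hβU
  set dU : G × G → ℂˣ := fun p => βU p * (c p.1 p.2)⁻¹ with hdU
  set dAdd : ((G × G) →₀ ℤ) →+ Additive ℂˣ :=
    Finsupp.liftAddHom (fun p => zmultiplesHom _ (Additive.ofMul (dU p))) with hdAdd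
  have dAdd_single : ∀ p : G × G, dAdd (Finsupp.single p (1 : ℤ)) = Additive.ofMul (dU p) := by
    intro p
    rw [hdAdd, Finsupp.liftAddHom_apply_single]
    exact one_zsmul _
  have dAdd_FL : ∀ l : List (G × G), dAdd (FL l) = Additive.ofMul ((l.map dU).prod) := by
    intro l
    rw [map_FL, ← ofMul_list_sum]
    congr 1
    exact List.map_congr_left (fun p _ => dAdd_single p)
  have hker : ∀ a : (G × G) →₀ ℤ, bd a = 0 → dAdd a = 0 := by
    intro a ha
    obtain ⟨lP, lN, rfl⟩ := decomp a
    rw [map_sub, sub_eq_zero, bd_FL, bd_FL] at ha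
    -- the units identity coming from cancellation of the t-parts
    have hUnits : (lP.map (fun p => Paper.sKK c p.1 p.2)).prod *
        (lN.map (fun p => Paper.cKK c p.1 p.2)).prod
        = (lN.map (fun p => Paper.sKK c p.1 p.2)).prod *
            (lP.map (fun p => Paper.cKK c p.1 p.2)).prod := by
      refine Additive.ofMul.injective ?_
      rw [ofMul_mul, ofMul_mul, prodS_eq c lP, prodS_eq c lN, ha]
      abel
    have hmu := lemB hc1 hn1 lP lN ha
    have hCmap : ∀ l : List (G × G),
        (l.map (fun p => Paper.cKK c p.1 p.2)).prod
          = Units.map (Paper.iotaC G).toMonoidHom ((l.map (ccm c)).prod) := by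
      intro l
      rw [map_list_prod, List.map_map]
      rfl
    have hSP : (lN.map (fun p => Paper.sKK c p.1 p.2)).prod *
        Units.map (Paper.iotaC G).toMonoidHom
          ((lP.map (ccm c)).prod * ((lN.map (ccm c)).prod)⁻¹)
        = (lP.map (fun p => Paper.sKK c p.1 p.2)).prod := by
      rw [hCmap, hCmap] at hUnits
      rw [map_mul, map_inv, ← mul_assoc, ← hUnits, mul_assoc, mul_inv_cancel, mul_one]
    have hval : (((lN.map (fun p => Paper.sKK c p.1 p.2)).prod : (Paper.KK G)ˣ) : Paper.KK G) *
        Paper.iotaC G (((lP.map (ccm c)).prod * ((lN.map (ccm c)).prod)⁻¹ : ℂˣ) : ℂ)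
        = (((lP.map (fun p => Paper.sKK c p.1 p.2)).prod : (Paper.KK G)ˣ) : Paper.KK G) :=
      congrArg Units.val hSP
    have hvz : (((lP.map (ccm c)).prod * ((lN.map (ccm c)).prod)⁻¹ : ℂˣ) : ℂ) ∈
        Paper.Qmu c := Subfield.subset_closure ⟨_, hmu, rfl⟩
    have hiz : Paper.iotaC G (((lP.map (ccm c)).prod * ((lN.map (ccm c)).prod)⁻¹ : ℂˣ) : ℂ)
        ∈ Paper.Ssub c := qmuK_le_Ssub c (iota_mu_mem c hmu)
    have hPhiEq : (lP.map (fun p =>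
        φ ((Paper.sKK c p.1 p.2 : (Paper.KK G)ˣ) : Paper.KK G))).prod
        = (lN.map (fun p =>
            φ ((Paper.sKK c p.1 p.2 : (Paper.KK G)ˣ) : Paper.KK G))).prod *
          (((lP.map (ccm c)).prod * ((lN.map (ccm c)).prod)⁻¹ : ℂˣ) : ℂ) := by
      rw [← phi_prod lP, ← phi_prod lN, ← sval_prod c lP, ← sval_prod c lN, ← hval,
        h2 _ (by rw [sval_prod]; exact sprod_mem c lN) _ hiz, h4 _ hvz]
    have hBU : (lP.map βU).prod = (lN.map βU).prod *
        ((lP.map (ccm c)).prod * ((lN.map (ccm c)).prod)⁻¹) := by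
      refine Units.ext ?_
      have hv : ∀ l : List (G × G), (((l.map βU).prod : ℂˣ) : ℂ)
          = (l.map (fun p =>
              φ ((Paper.sKK c p.1 p.2 : (Paper.KK G)ˣ) : Paper.KK G))).prod := by
        intro l
        rw [show (((l.map βU).prod : ℂˣ) : ℂ) = Units.coeHom ℂ ((l.map βU).prod) from rfl,
          map_list_prod, List.map_map]
        rfl
      rw [Units.val_mul, hv, hv, hPhiEq]
    have hdprod : ∀ l : List (G × G),
        (l.map dU).prod = (l.map βU).prod * ((l.map (ccm c)).prod)⁻¹ := by
      intro l
      rw [show l.map dU = l.map (fun p => βU p * (ccm c p)⁻¹) from rfl,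
        List.prod_map_mul, prod_map_inv']
    have hDPDN : (lP.map dU).prod = (lN.map dU).prod := by
      rw [hdprod, hdprod, hBU]
      refine Additive.ofMul.injective ?_
      simp only [ofMul_mul, ofMul_inv]
      abel
    rw [map_sub, dAdd_FL, dAdd_FL, hDPDN, sub_self]
  obtain ⟨E, hE⟩ := exists_extension bd dAdd hker
  refine ⟨fun g => Additive.toMul (E (Finsupp.single g (1 : ℤ))), fun g h => ?_⟩
  have h5 := hE (Finsupp.single ((g, h) : G × G) (1 : ℤ))
  rw [bd_single, dAdd_single] at h5
  rw [wmap, map_sub, map_add] at h5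
  have hd : dU (g, h) = Additive.toMul (E (Finsupp.single g (1 : ℤ))) *
      Additive.toMul (E (Finsupp.single h (1 : ℤ))) *
      (Additive.toMul (E (Finsupp.single (g * h) (1 : ℤ))))⁻¹ := by
    have h6 := congrArg Additive.toMul h5
    rw [toMul_sub, toMul_add, toMul_ofMul] at h6
    rw [div_eq_mul_inv] at h6
    exact h6.symm
  have hfin : βU (g, h) = dU (g, h) * c g h := by
    rw [hdU]
    exact (inv_mul_cancel_right _ _).symm
  have : βU (g, h) = Additive.toMul (E (Finsupp.single g (1 : ℤ))) *
      Additive.toMul (E (Finsupp.single h (1 : ℤ))) *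
      (Additive.toMul (E (Finsupp.single (g * h) (1 : ℤ))))⁻¹ * c g h := by
    rw [hfin, hd]
  exact congrArg Units.val this

end AuxC
section AuxD
open Finsupp

variable {G : Type*} [Group G]

lemma sval_one_left {c : G → G → ℂˣ} (hn : ∀ g : G, c 1 g = 1) (g : G) :
    ((Paper.sKK c 1 g : (Paper.KK G)ˣ) : Paper.KK G)
      = ((Paper.sKK c 1 1 : (Paper.KK G)ˣ) : Paper.KK G) := by
  rw [sKK_one_left hn g, sKK_one_left hn 1]

lemma sval_one_right {c : G → G → ℂˣ} (hn1 : ∀ g : G, c 1 g = 1)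
    (hn2 : ∀ g : G, c g 1 = 1) (g : G) :
    ((Paper.sKK c g 1 : (Paper.KK G)ˣ) : Paper.KK G)
      = ((Paper.sKK c 1 1 : (Paper.KK G)ˣ) : Paper.KK G) := by
  rw [sKK_one_right hn2 g, sKK_one_left hn1 1]

/-- The graded homomorphism induced by a specialization `φ`. -/
lemma theta_exists [Fintype G] (c : G → G → ℂˣ)
    (hnorm : Paper.IsNormalized c)
    (L : Subfield ℂ)
    {B0 : Type*} [Ring B0] [Algebra ↥(Paper.Ssub c) B0]
    (σS : G → G → (↥(Paper.Ssub c))ˣ)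
    (hσ : ∀ g h : G, ((σS g h : ↥(Paper.Ssub c)) : Paper.KK G)
        = ((Paper.sKK c g h : (Paper.KK G)ˣ) : Paper.KK G))
    (w : G → B0) (hw : Paper.IsTwistedBasis ↥(Paper.Ssub c) σS w)
    (φ : Paper.KK G → ℂ)
    (h1 : ∀ x ∈ Paper.Ssub c, ∀ y ∈ Paper.Ssub c, φ (x + y) = φ x + φ y)
    (h2 : ∀ x ∈ Paper.Ssub c, ∀ y ∈ Paper.Ssub c, φ (x * y) = φ x * φ y)
    (h3 : φ 1 = 1)
    (h5 : ∀ x ∈ Paper.Ssub c, φ x ∈ L)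
    (B : Type*) [Ring B] [Algebra ↥L B]
    (βL : G → G → (↥L)ˣ) (v : G → B)
    (hβ : ∀ g h : G, ((βL g h : ↥L) : ℂ) = φ ((Paper.sKK c g h : (Paper.KK G)ˣ) : Paper.KK G))
    (hv : Paper.IsTwistedBasis ↥L βL v) :
    ∃ Θ : B0 →+* B, (∀ g : G, Θ (w g) = v g) ∧
      ∀ r : ↥(Paper.Ssub c), ∃ hmem : φ (r : Paper.KK G) ∈ L,
        Θ (algebraMap ↥(Paper.Ssub c) B0 r) = algebraMap ↥L B ⟨φ (r : Paper.KK G), hmem⟩ := by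
  classical
  -- the coefficient homomorphism
  set φS : ↥(Paper.Ssub c) → ↥L := fun r => (⟨φ (r : Paper.KK G), h5 _ r.2⟩ : ↥L) with hφS
  have φS_mul : ∀ a b : ↥(Paper.Ssub c), φS (a * b) = φS a * φS b := by
    intro a b
    exact Subtype.ext (h2 _ a.2 _ b.2)
  have φS_add : ∀ a b : ↥(Paper.Ssub c), φS (a + b) = φS a + φS b := by
    intro a b
    exact Subtype.ext (h1 _ a.2 _ b.2)
  have φS_one : φS 1 = 1 := Subtype.ext h3
  have φS_zero : φS 0 = 0 := by
    have h0 := h1 0 (zero_mem _) 0 (zero_mem _)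
    rw [add_zero] at h0
    have hz : φ (0 : Paper.KK G) = 0 := add_eq_left.mp h0.symm
    exact Subtype.ext hz
  have φS_σβ : ∀ g h : G, φS ((σS g h : (↥(Paper.Ssub c))ˣ) : ↥(Paper.Ssub c)) = βL g h := by
    intro g h
    refine Subtype.ext ?_
    show φ _ = _
    rw [hσ, ← hβ]
  -- the basis given by the twisted basis w
  set bS : Module.Basis G ↥(Paper.Ssub c) B0 := Module.Basis.mk hw.1 hw.2.1.ge with hbSdef
  have hbS : ∀ g : G, bS g = w g := fun g => Module.Basis.mk_apply hw.1 hw.2.1.ge g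
  have hexpand : ∀ x : B0, ∑ g : G, bS.repr x g • w g = x := by
    intro x
    have := bS.sum_equivFun x
    simp only [Module.Basis.equivFun_apply] at this
    calc ∑ g : G, bS.repr x g • w g = ∑ g : G, bS.repr x g • bS g := by
          simp only [hbS]
      _ = x := this
  set Θ0 : B0 → B := fun x => ∑ g : G, (φS (bS.repr x g)) • v g with hΘ0
  have Θadd' : ∀ x y : B0, Θ0 (x + y) = Θ0 x + Θ0 y := by
    intro x y
    rw [hΘ0]
    simp only [map_add, Finsupp.add_apply, φS_add, add_smul]
    rw [Finset.sum_add_distrib]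
  set Θadd : B0 →+ B := AddMonoidHom.mk' Θ0 Θadd' with hΘadd
  have θw : ∀ (r : ↥(Paper.Ssub c)) (k : G), Θadd (r • w k) = (φS r) • v k := by
    intro r k
    show (∑ g : G, (φS ((bS.repr (r • w k)) g)) • v g) = φS r • v k
    rw [← hbS k, map_smul, bS.repr_self, Finsupp.smul_single, smul_eq_mul, mul_one]
    rw [Finset.sum_eq_single k (fun b _ hb => by
        rw [Finsupp.single_eq_of_ne hb, φS_zero, zero_smul])
      (fun h => absurd (Finset.mem_univ k) h)]
    rw [Finsupp.single_eq_same]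
  have θw1 : ∀ k : G, Θadd (w k) = v k := by
    intro k
    have := θw 1 k
    rw [one_smul, φS_one, one_smul] at this
    exact this
  have θpure : ∀ (r r' : ↥(Paper.Ssub c)) (g h : G),
      Θadd ((r • w g) * (r' • w h)) = Θadd (r • w g) * Θadd (r' • w h) := by
    intro r r' g h
    have hlhs : (r • w g) * (r' • w h)
        = (r * r' * ((σS g h : (↥(Paper.Ssub c))ˣ) : ↥(Paper.Ssub c))) • w (g * h) := by
      rw [smul_mul_assoc, mul_smul_comm, hw.2.2 g h]
      exact (smul_smul r r' _).trans (smul_smul _ _ _)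
    rw [hlhs, θw, θw, θw]
    rw [φS_mul, φS_mul, φS_σβ]
    rw [smul_mul_assoc, mul_smul_comm, hv.2.2 g h]
    exact ((smul_smul (φS r) (φS r') _).trans (smul_smul _ _ _)).symm
  have θmul : ∀ x y : B0, Θadd (x * y) = Θadd x * Θadd y := by
    intro x y
    conv_lhs => rw [← hexpand x, ← hexpand y]
    conv_rhs => rw [← hexpand x, ← hexpand y]
    rw [Finset.sum_mul_sum]
    rw [map_sum]
    simp only [map_sum, θpure]
    exact (Finset.sum_mul_sum _ _ _ _).symm
  -- identity computation
  have hσ1 : ∀ g : G, σS 1 g = σS 1 1 := by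
    intro g
    refine Units.ext (Subtype.ext ?_)
    rw [hσ, hσ, sval_one_left hnorm.1 g]
  have hσg1 : ∀ g : G, σS g 1 = σS 1 1 := by
    intro g
    refine Units.ext (Subtype.ext ?_)
    rw [hσ, hσ, sval_one_right hnorm.1 hnorm.2 g]
  have hβ1g : ∀ g : G, βL 1 g = βL 1 1 := by
    intro g
    refine Units.ext (Subtype.ext ?_)
    rw [hβ, hβ, sval_one_left hnorm.1 g]
  set es : ↥(Paper.Ssub c) := (((σS 1 1)⁻¹ : (↥(Paper.Ssub c))ˣ) : ↥(Paper.Ssub c)) with hes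
  have hew : ∀ g : G, (es • w 1) * w g = w g := by
    intro g
    rw [smul_mul_assoc, hw.2.2 1 g, one_mul, hσ1 g,
      smul_smul es (((σS 1 1 : (↥(Paper.Ssub c))ˣ)) : ↥(Paper.Ssub c)) (w g), hes,
      ← Units.val_mul, inv_mul_cancel, Units.val_one, one_smul]
  have he_all : ∀ x : B0, (es • w 1) * x = x := by
    intro x
    conv_lhs => rw [← hexpand x]
    rw [Finset.mul_sum]
    conv_rhs => rw [← hexpand x]
    refine Finset.sum_congr rfl ?_
    intro g _
    rw [mul_smul_comm, hew g]
  have he1 : es • w 1 = 1 := by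
    have := he_all 1
    rwa [mul_one] at this
  -- v-side identity
  have hfv : (((βL 1 1)⁻¹ : (↥L)ˣ) : ↥L) • v 1 = 1 := by
    have hfw : ∀ g : G, ((((βL 1 1)⁻¹ : (↥L)ˣ) : ↥L) • v 1) * v g = v g := by
      intro g
      rw [smul_mul_assoc, hv.2.2 1 g, one_mul, smul_smul, hβ1g g, Units.inv_mul, one_smul]
    have hvexp : ∀ x : B, x ∈ Submodule.span ↥L (Set.range v) →
        ((((βL 1 1)⁻¹ : (↥L)ˣ) : ↥L) • v 1) * x = x := by
      intro x hx
      induction hx using Submodule.span_induction with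
      | mem y hy =>
          obtain ⟨g, rfl⟩ := hy
          exact hfw g
      | zero => rw [mul_zero]
      | add y z _ _ hy hz => rw [mul_add, hy, hz]
      | smul a y _ hy => rw [mul_smul_comm, hy]
    have h1B : (1 : B) ∈ Submodule.span ↥L (Set.range v) := by
      rw [hv.2.1]
      trivial
    have := hvexp 1 h1B
    rwa [mul_one] at this
  have hv1 : v 1 = ((βL 1 1 : (↥L)ˣ) : ↥L) • (1 : B) := by
    rw [← hfv, smul_smul ((βL 1 1 : (↥L)ˣ) : ↥L) (((βL 1 1)⁻¹ : (↥L)ˣ) : ↥L) (v 1),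
      ← Units.val_mul, mul_inv_cancel, Units.val_one, one_smul]
  have hφinv : φS es * ((βL 1 1 : (↥L)ˣ) : ↥L) = 1 := by
    have h11 : φS ((σS 1 1 : (↥(Paper.Ssub c))ˣ) : ↥(Paper.Ssub c)) = βL 1 1 := φS_σβ 1 1
    have : φS (es * ((σS 1 1 : (↥(Paper.Ssub c))ˣ) : ↥(Paper.Ssub c))) = φS 1 := by
      rw [hes, ← Units.val_mul, inv_mul_cancel, Units.val_one]
    rw [φS_mul, h11, φS_one] at this
    exact this
  have Θone : Θadd 1 = 1 := by
    rw [← he1, θw, hv1, smul_smul (φS es) ((βL 1 1 : (↥L)ˣ) : ↥L) (1 : B), hφinv, one_smul]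
  have Θalg : ∀ r : ↥(Paper.Ssub c),
      Θadd (algebraMap ↥(Paper.Ssub c) B0 r) = algebraMap ↥L B (φS r) := by
    intro r
    rw [Algebra.algebraMap_eq_smul_one, ← he1, smul_smul r es (w 1), θw, hv1,
      smul_smul (φS (r * es)) ((βL 1 1 : (↥L)ˣ) : ↥L) (1 : B),
      φS_mul, mul_assoc, hφinv, mul_one, Algebra.algebraMap_eq_smul_one]
  refine ⟨{ toFun := Θ0, map_one' := Θone, map_mul' := θmul,
            map_zero' := by exact Θadd.map_zero, map_add' := Θadd' }, ?_, ?_⟩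
  · intro g
    exact θw1 g
  · intro r
    exact ⟨h5 _ r.2, Θalg r⟩

end AuxD
section AuxE
open Paper

variable {G : Type*} [Group G]

/-- The subring of elements representable as fractions with denominator not vanishing
at `pt`, with value in `L`. -/
noncomputable def Tset (pt : ℕ × G → ℂ) (L : Subfield ℂ) : Subring (Paper.KK G) where
  carrier := {x | ∃ a b : MvPolynomial (ℕ × G) ℂ,
    MvPolynomial.eval pt b ≠ 0 ∧
    x * algebraMap (MvPolynomial (ℕ × G) ℂ) (Paper.KK G) b
      = algebraMap (MvPolynomial (ℕ × G) ℂ) (Paper.KK G) a ∧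
    MvPolynomial.eval pt a / MvPolynomial.eval pt b ∈ L}
  zero_mem' := ⟨0, 1, by simp, by simp, by simpa using L.zero_mem⟩
  one_mem' := ⟨1, 1, by simp, by simp, by simpa using L.one_mem⟩
  add_mem' := by
    rintro x y ⟨a, b, hb, hx, hL⟩ ⟨a', b', hb', hy, hL'⟩
    refine ⟨a * b' + b * a', b * b', by simp [hb, hb'], ?_, ?_⟩
    · rw [map_mul, map_add, map_mul, map_mul]
      linear_combination (algebraMap (MvPolynomial (ℕ × G) ℂ) (Paper.KK G) b') * hx +
        (algebraMap (MvPolynomial (ℕ × G) ℂ) (Paper.KK G) b) * hy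
    · rw [map_add, map_mul, map_mul, map_mul, ← div_add_div _ _ hb hb']
      exact add_mem hL hL'
  mul_mem' := by
    rintro x y ⟨a, b, hb, hx, hL⟩ ⟨a', b', hb', hy, hL'⟩
    refine ⟨a * a', b * b', by simp [hb, hb'], ?_, ?_⟩
    · rw [map_mul, map_mul]
      linear_combination (y * algebraMap (MvPolynomial (ℕ × G) ℂ) (Paper.KK G) b') * hx +
        (algebraMap (MvPolynomial (ℕ × G) ℂ) (Paper.KK G) a) * hy
    · rw [map_mul, map_mul, ← div_mul_div_comm]
      exact mul_mem hL hL'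
  neg_mem' := by
    rintro x ⟨a, b, hb, hx, hL⟩
    exact ⟨-a, b, hb, by rw [map_neg, ← hx]; ring,
      by rw [map_neg, neg_div]; exact neg_mem hL⟩

open scoped Classical in
noncomputable def phiFun (pt : ℕ × G → ℂ) : Paper.KK G → ℂ := fun x =>
  if h : ∃ ab : MvPolynomial (ℕ × G) ℂ × MvPolynomial (ℕ × G) ℂ,
      MvPolynomial.eval pt ab.2 ≠ 0 ∧
        x * algebraMap (MvPolynomial (ℕ × G) ℂ) (Paper.KK G) ab.2
          = algebraMap (MvPolynomial (ℕ × G) ℂ) (Paper.KK G) ab.1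
  then MvPolynomial.eval pt h.choose.1 / MvPolynomial.eval pt h.choose.2 else 0

lemma phiFun_spec (pt : ℕ × G → ℂ) {x : Paper.KK G} {a b : MvPolynomial (ℕ × G) ℂ}
    (hb : MvPolynomial.eval pt b ≠ 0)
    (hx : x * algebraMap (MvPolynomial (ℕ × G) ℂ) (Paper.KK G) b
      = algebraMap (MvPolynomial (ℕ × G) ℂ) (Paper.KK G) a) :
    phiFun pt x = MvPolynomial.eval pt a / MvPolynomial.eval pt b := by
  have hex : ∃ ab : MvPolynomial (ℕ × G) ℂ × MvPolynomial (ℕ × G) ℂ,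
      MvPolynomial.eval pt ab.2 ≠ 0 ∧
        x * algebraMap (MvPolynomial (ℕ × G) ℂ) (Paper.KK G) ab.2
          = algebraMap (MvPolynomial (ℕ × G) ℂ) (Paper.KK G) ab.1 := ⟨(a, b), hb, hx⟩
  classical
  rw [phiFun]
  rw [dif_pos hex]
  obtain ⟨hb', hx'⟩ := hex.choose_spec
  have hcross : hex.choose.1 * b = a * hex.choose.2 := by
    apply IsFractionRing.injective (MvPolynomial (ℕ × G) ℂ) (Paper.KK G)
    rw [map_mul, map_mul, ← hx, ← hx']
    ring
  have hev := congrArg (MvPolynomial.eval pt) hcross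
  rw [map_mul, map_mul] at hev
  rw [div_eq_div_iff hb' hb]
  linear_combination hev

noncomputable def ptOf (μlam : G → ℂˣ) : ℕ × G → ℂ := fun p =>
  if p.1 = 0 then (((μlam p.2)⁻¹ : ℂˣ) : ℂ) else 1

lemma ptOf_ne (μlam : G → ℂˣ) (p : ℕ × G) : ptOf μlam p ≠ 0 := by
  unfold ptOf
  split_ifs
  · exact Units.ne_zero _
  · exact one_ne_zero

lemma ptOf_zero (μlam : G → ℂˣ) (g : G) :
    ptOf μlam ((0 : ℕ), g) = (((μlam g)⁻¹ : ℂˣ) : ℂ) := by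
  simp [ptOf]

lemma sval_eq (c : G → G → ℂˣ) (g h : G) :
    ((Paper.sKK c g h : (Paper.KK G)ˣ) : Paper.KK G)
      = Paper.tVar G (0, g) * Paper.tVar G (0, h) * (Paper.tVar G (0, g * h))⁻¹ *
          Paper.iotaC G ((c g h : ℂˣ) : ℂ) := by
  show ((Paper.tU G g * Paper.tU G h * (Paper.tU G (g * h))⁻¹ * Paper.cKK c g h :
      (Paper.KK G)ˣ) : Paper.KK G) = _
  rw [Units.val_mul, Units.val_mul, Units.val_mul, Units.val_inv_eq_inv_val]
  rfl

lemma s_rep (c : G → G → ℂˣ) (g h : G) :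
    ((Paper.sKK c g h : (Paper.KK G)ˣ) : Paper.KK G) *
        algebraMap (MvPolynomial (ℕ × G) ℂ) (Paper.KK G) (MvPolynomial.X (0, g * h))
      = algebraMap (MvPolynomial (ℕ × G) ℂ) (Paper.KK G)
          (MvPolynomial.X (0, g) * MvPolynomial.X (0, h) *
            MvPolynomial.C ((c g h : ℂˣ) : ℂ)) := by
  rw [sval_eq, map_mul, map_mul]
  have h1 : algebraMap (MvPolynomial (ℕ × G) ℂ) (Paper.KK G) (MvPolynomial.X (0, g))
      = Paper.tVar G (0, g) := rfl
  have h2 : algebraMap (MvPolynomial (ℕ × G) ℂ) (Paper.KK G) (MvPolynomial.X (0, h))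
      = Paper.tVar G (0, h) := rfl
  have h3 : algebraMap (MvPolynomial (ℕ × G) ℂ) (Paper.KK G) (MvPolynomial.X (0, g * h))
      = Paper.tVar G (0, g * h) := rfl
  have h4 : algebraMap (MvPolynomial (ℕ × G) ℂ) (Paper.KK G)
      (MvPolynomial.C ((c g h : ℂˣ) : ℂ)) = Paper.iotaC G ((c g h : ℂˣ) : ℂ) := rfl
  rw [h1, h2, h3, h4]
  have hne := tVar_ne (G := G) (0, g * h)
  field_simp

end AuxE
lemma upC_val {G : Type*} {L : Subfield ℂ} (βL : G → G → (↥L)ˣ) (g h : G) :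
    ((Paper.upC βL g h : ℂˣ) : ℂ) = ((βL g h : ↥L) : ℂ) := rfl
/-- Let `S = ℚ(μ)[Y]` and `L ⊆ ℂ` a subfield containing `ℚ(μ)`.
If `φ : S → L` is a `ℚ(μ)`-algebra homomorphism and `β = φ ∘ s`, then `β` is a 2-cocycle
with values in `L^×` which is cohomologous to `c` over `ℂ`, `φ` induces a `G`-graded
homomorphism `S^sG → L^βG`, and `L^βG` is a `G`-graded form of `ℂ^cG`.  Conversely, if
`L^βG` is a `G`-graded form of `ℂ^cG` then there is a `ℚ(μ)`-algebra homomorphism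
`φ : S → L` such that `γ = φ ∘ s` is cohomologous to `β` over `L`, and `φ` induces a
homomorphism from `S^sG` onto `φ(S)^γG`, a `G`-graded form of `L^βG`. -/
theorem specialization_and_forms
    {G : Type*} [Group G] [Fintype G] (c : G → G → ℂˣ) (hc : IsNondeg c)
    (hnorm : IsNormalized c)
    (L : Subfield ℂ) (hL : ∀ x ∈ muSet c, ((x : ℂˣ) : ℂ) ∈ L)
    {B0 : Type*} [Ring B0] [Algebra ↥(Ssub c) B0]
    (σS : G → G → (↥(Ssub c))ˣ)
    (hσ : ∀ g h : G, ((σS g h : ↥(Ssub c)) : KK G) = ((sKK c g h : (KK G)ˣ) : KK G))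
    (w : G → B0) (hw : IsTwistedBasis ↥(Ssub c) σS w) :
    -- Forward direction:
    (∀ φ : KK G → ℂ,
      (∀ x ∈ Ssub c, ∀ y ∈ Ssub c, φ (x + y) = φ x + φ y) →
      (∀ x ∈ Ssub c, ∀ y ∈ Ssub c, φ (x * y) = φ x * φ y) →
      φ 1 = 1 →
      (∀ x : ℂ, x ∈ Qmu c → φ (iotaC G x) = x) →
      (∀ x ∈ Ssub c, φ x ∈ L) →
      -- β = φ∘s is an L^×-valued 2-cocycle …
      (∀ g h : G, φ ((sKK c g h : (KK G)ˣ) : KK G) ∈ L ∧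
          φ ((sKK c g h : (KK G)ˣ) : KK G) ≠ 0) ∧
      (∀ g h k : G,
          φ ((sKK c g h : (KK G)ˣ) : KK G) * φ ((sKK c (g * h) k : (KK G)ˣ) : KK G) =
          φ ((sKK c h k : (KK G)ˣ) : KK G) * φ ((sKK c g (h * k) : (KK G)ˣ) : KK G)) ∧
      -- … cohomologous to c over ℂ …
      (∃ lam : G → ℂˣ, ∀ g h : G,
          φ ((sKK c g h : (KK G)ˣ) : KK G) =
            ((lam g * lam h * (lam (g * h))⁻¹ * c g h : ℂˣ) : ℂ)) ∧
      -- … φ induces a G-graded homomorphism S^sG → L^βG, and L^βG is a G-graded form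
      (∀ (B : Type) [Ring B] [Algebra ↥L B] (βL : G → G → (↥L)ˣ) (v : G → B),
        (∀ g h : G, ((βL g h : ↥L) : ℂ) = φ ((sKK c g h : (KK G)ˣ) : KK G)) →
        IsTwistedBasis ↥L βL v →
        IsGradedForm L c B ∧
        ∃ Θ : B0 →+* B, (∀ g : G, Θ (w g) = v g) ∧
          ∀ r : ↥(Ssub c), ∃ hmem : φ (r : KK G) ∈ L,
            Θ (algebraMap ↥(Ssub c) B0 r) = algebraMap ↥L B ⟨φ (r : KK G), hmem⟩)) ∧
    -- Converse direction:
    (∀ (B : Type) [Ring B] [Algebra ↥L B] (βL : G → G → (↥L)ˣ) (v : G → B),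
      IsCocycle (upC βL) → IsTwistedBasis ↥L βL v →
      Cohomologous (upC βL) c →  -- i.e. L^βG is a G-graded form of ℂ^cG
      ∃ φ : KK G → ℂ,
        (∀ x ∈ Ssub c, ∀ y ∈ Ssub c, φ (x + y) = φ x + φ y) ∧
        (∀ x ∈ Ssub c, ∀ y ∈ Ssub c, φ (x * y) = φ x * φ y) ∧
        φ 1 = 1 ∧
        (∀ x : ℂ, x ∈ Qmu c → φ (iotaC G x) = x) ∧
        (∀ x ∈ Ssub c, φ x ∈ L) ∧
        -- γ = φ∘s is cohomologous to β over L …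
        (∃ lam : G → (↥L)ˣ, ∀ g h : G,
            φ ((sKK c g h : (KK G)ˣ) : KK G) =
              (((lam g * lam h * (lam (g * h))⁻¹ * βL g h : (↥L)ˣ) : ↥L) : ℂ)) ∧
        -- … and φ induces a homomorphism from S^sG onto φ(S)^γG ⊆ L^βG,
        -- a G-graded form of L^βG
        ∃ Θ : B0 →+* B, (∀ g : G, ∃ l : ↥L, Θ (w g) = l • v g) ∧
          ∀ r : ↥(Ssub c), ∃ hmem : φ (r : KK G) ∈ L,
            Θ (algebraMap ↥(Ssub c) B0 r) = algebraMap ↥L B ⟨φ (r : KK G), hmem⟩) := by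
  classical
  constructor
  · -- forward direction
    intro φ h1 h2 h3 h4 h5
    have hsne : ∀ g h : G, φ ((sKK c g h : (KK G)ˣ) : KK G) ≠ 0 := by
      intro g h hz
      have hmul := h2 _ (s_mem c g h) _ (sinv_mem c g h)
      rw [Units.mul_inv, h3, hz, zero_mul] at hmul
      exact one_ne_zero hmul
    have hcoc2 : ∀ g h k : G,
        φ ((sKK c g h : (KK G)ˣ) : KK G) * φ ((sKK c (g * h) k : (KK G)ˣ) : KK G) =
          φ ((sKK c h k : (KK G)ˣ) : KK G) * φ ((sKK c g (h * k) : (KK G)ˣ) : KK G) := by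
      intro g h k
      rw [← h2 _ (s_mem c g h) _ (s_mem c (g * h) k),
        ← h2 _ (s_mem c h k) _ (s_mem c g (h * k)),
        ← Units.val_mul, ← Units.val_mul, sKK_cocycle hc.1 g h k]
    obtain ⟨lam, hlam⟩ := forward3 c hc.1 hnorm.1 φ h2 h3 h4
    refine ⟨fun g h => ⟨h5 _ (s_mem c g h), hsne g h⟩, hcoc2, ⟨lam, hlam⟩, ?_⟩
    intro B _ _ βL v hβv hv
    constructor
    · refine ⟨βL, v, ?_, hv, ?_⟩
      · intro g h k
        refine Units.ext ?_
        rw [Units.val_mul, Units.val_mul, upC_val, upC_val, upC_val, upC_val,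
          hβv, hβv, hβv, hβv]
        exact hcoc2 g h k
      · refine ⟨fun g => (lam g)⁻¹, fun g h => ?_⟩
        have hu : upC βL g h = lam g * lam h * (lam (g * h))⁻¹ * c g h := by
          refine Units.ext ?_
          rw [upC_val, hβv]
          exact hlam g h
        rw [hu]
        refine Additive.ofMul.injective ?_
        simp only [ofMul_mul, ofMul_inv]
        abel
    · exact theta_exists c hnorm L σS hσ w hw φ h1 h2 h3 h5 B βL v hβv hv
  · -- converse direction
    intro B _ _ βL v hcocB hv hcoh
    obtain ⟨μlam, hμ⟩ := hcoh
    have hQmuL : Qmu c ≤ L := by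
      refine Subfield.closure_le.mpr ?_
      rintro y ⟨z, hz, rfl⟩
      exact hL z hz
    have hvalβ : ∀ g h : G,
        MvPolynomial.eval (ptOf μlam) (MvPolynomial.X ((0 : ℕ), g) *
            MvPolynomial.X ((0 : ℕ), h) * MvPolynomial.C ((c g h : ℂˣ) : ℂ)) /
          MvPolynomial.eval (ptOf μlam) (MvPolynomial.X ((0 : ℕ), g * h))
          = ((βL g h : ↥L) : ℂ) := by
      intro g h
      have hc' := congrArg Units.val (hμ g h)
      rw [Units.val_mul, Units.val_mul, Units.val_inv_eq_inv_val, upC_val] at hc'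
      rw [MvPolynomial.eval_mul, MvPolynomial.eval_mul, MvPolynomial.eval_X,
        MvPolynomial.eval_X, MvPolynomial.eval_C, MvPolynomial.eval_X, ptOf_zero,
        ptOf_zero, ptOf_zero, hc']
      have hg : ((μlam g : ℂˣ) : ℂ) ≠ 0 := Units.ne_zero _
      have hh : ((μlam h : ℂˣ) : ℂ) ≠ 0 := Units.ne_zero _
      have hgh : ((μlam (g * h) : ℂˣ) : ℂ) ≠ 0 := Units.ne_zero _
      field_simp
      rw [Units.val_mul, Units.val_inv_eq_inv_val, Units.val_inv_eq_inv_val, Units.val_inv_eq_inv_val]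
      field_simp
    have hbigne : ∀ g h : G,
        MvPolynomial.eval (ptOf μlam) (MvPolynomial.X ((0 : ℕ), g) *
            MvPolynomial.X ((0 : ℕ), h) * MvPolynomial.C ((c g h : ℂˣ) : ℂ)) ≠ 0 := by
      intro g h
      rw [MvPolynomial.eval_mul, MvPolynomial.eval_mul, MvPolynomial.eval_X,
        MvPolynomial.eval_X, MvPolynomial.eval_C]
      exact mul_ne_zero (mul_ne_zero (ptOf_ne μlam _) (ptOf_ne μlam _)) (Units.ne_zero _)
    have hXne : ∀ g : G,
        MvPolynomial.eval (ptOf μlam) (MvPolynomial.X ((0 : ℕ), g)) ≠ 0 := by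
      intro g
      rw [MvPolynomial.eval_X]
      exact ptOf_ne μlam _
    have hTle : Ssub c ≤ Tset (ptOf μlam) L := by
      refine Subring.closure_le.mpr ?_
      rintro x ((hx | hx) | hx)
      · -- elements of QmuK
        have hQ : x ∈ Subfield.map (iotaC G) (Qmu c) := by
          refine (Subfield.closure_le.mpr ?_) hx
          rintro y ⟨z, hz, rfl⟩
          exact ⟨((z : ℂˣ) : ℂ), Subfield.subset_closure ⟨z, hz, rfl⟩, rfl⟩
        obtain ⟨z, hz, rfl⟩ := hQ
        refine ⟨MvPolynomial.C z, 1, by simp, ?_, ?_⟩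
        · rw [map_one, mul_one]
          rfl
        · rw [map_one, MvPolynomial.eval_C, div_one]
          exact hQmuL hz
      · obtain ⟨g, h, rfl⟩ := hx
        exact ⟨_, _, hXne (g * h), s_rep c g h, by rw [hvalβ g h]; exact (βL g h).1.2⟩
      · obtain ⟨g, h, rfl⟩ := hx
        refine ⟨MvPolynomial.X ((0 : ℕ), g * h),
          MvPolynomial.X ((0 : ℕ), g) * MvPolynomial.X ((0 : ℕ), h) *
            MvPolynomial.C ((c g h : ℂˣ) : ℂ), hbigne g h, ?_, ?_⟩
        · rw [← s_rep c g h, ← mul_assoc, ← Units.val_mul, inv_mul_cancel, Units.val_one,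
            one_mul]
        · rw [show MvPolynomial.eval (ptOf μlam) (MvPolynomial.X ((0 : ℕ), g * h)) /
              MvPolynomial.eval (ptOf μlam) (MvPolynomial.X ((0 : ℕ), g) *
                MvPolynomial.X ((0 : ℕ), h) * MvPolynomial.C ((c g h : ℂˣ) : ℂ))
              = (MvPolynomial.eval (ptOf μlam) (MvPolynomial.X ((0 : ℕ), g) *
                MvPolynomial.X ((0 : ℕ), h) * MvPolynomial.C ((c g h : ℂˣ) : ℂ)) /
                MvPolynomial.eval (ptOf μlam) (MvPolynomial.X ((0 : ℕ), g * h)))⁻¹ from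
            (inv_div _ _).symm, hvalβ g h]
          exact L.inv_mem (βL g h).1.2
    have hrep : ∀ x ∈ Ssub c, ∃ a b : MvPolynomial (ℕ × G) ℂ,
        MvPolynomial.eval (ptOf μlam) b ≠ 0 ∧
        x * algebraMap (MvPolynomial (ℕ × G) ℂ) (KK G) b
          = algebraMap (MvPolynomial (ℕ × G) ℂ) (KK G) a ∧
        MvPolynomial.eval (ptOf μlam) a / MvPolynomial.eval (ptOf μlam) b ∈ L :=
      fun x hx => hTle hx
    have φadd : ∀ x ∈ Ssub c, ∀ y ∈ Ssub c,
        phiFun (ptOf μlam) (x + y) = phiFun (ptOf μlam) x + phiFun (ptOf μlam) y := by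
      intro x hx y hy
      obtain ⟨a, b, hb, hxe, -⟩ := hrep x hx
      obtain ⟨a', b', hb', hye, -⟩ := hrep y hy
      rw [phiFun_spec _ hb hxe, phiFun_spec _ hb' hye,
        phiFun_spec _ (show MvPolynomial.eval (ptOf μlam) (b * b') ≠ 0 by
            rw [map_mul]; exact mul_ne_zero hb hb')
          (show (x + y) * algebraMap (MvPolynomial (ℕ × G) ℂ) (KK G) (b * b')
              = algebraMap (MvPolynomial (ℕ × G) ℂ) (KK G) (a * b' + b * a') by
            rw [map_mul, map_add, map_mul, map_mul]
            linear_combination (algebraMap (MvPolynomial (ℕ × G) ℂ) (KK G) b') * hxe +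
              (algebraMap (MvPolynomial (ℕ × G) ℂ) (KK G) b) * hye),
        map_add, map_mul, map_mul, map_mul, ← div_add_div _ _ hb hb']
    have φmul : ∀ x ∈ Ssub c, ∀ y ∈ Ssub c,
        phiFun (ptOf μlam) (x * y) = phiFun (ptOf μlam) x * phiFun (ptOf μlam) y := by
      intro x hx y hy
      obtain ⟨a, b, hb, hxe, -⟩ := hrep x hx
      obtain ⟨a', b', hb', hye, -⟩ := hrep y hy
      rw [phiFun_spec _ hb hxe, phiFun_spec _ hb' hye,
        phiFun_spec _ (show MvPolynomial.eval (ptOf μlam) (b * b') ≠ 0 by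
            rw [map_mul]; exact mul_ne_zero hb hb')
          (show (x * y) * algebraMap (MvPolynomial (ℕ × G) ℂ) (KK G) (b * b')
              = algebraMap (MvPolynomial (ℕ × G) ℂ) (KK G) (a * a') by
            rw [map_mul, map_mul]
            linear_combination (y * algebraMap (MvPolynomial (ℕ × G) ℂ) (KK G) b') * hxe +
              (algebraMap (MvPolynomial (ℕ × G) ℂ) (KK G) a) * hye),
        map_mul, map_mul, ← div_mul_div_comm]
    have φone : phiFun (ptOf μlam) 1 = 1 := by
      rw [phiFun_spec _ (show MvPolynomial.eval (ptOf μlam) (1 : MvPolynomial (ℕ × G) ℂ) ≠ 0 by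
          rw [map_one]; exact one_ne_zero)
        (show (1 : KK G) * algebraMap (MvPolynomial (ℕ × G) ℂ) (KK G) 1
            = algebraMap (MvPolynomial (ℕ × G) ℂ) (KK G) 1 by rw [one_mul]),
        map_one, div_one]
    have φiota : ∀ z : ℂ, phiFun (ptOf μlam) (iotaC G z) = z := by
      intro z
      rw [phiFun_spec _ (show MvPolynomial.eval (ptOf μlam) (1 : MvPolynomial (ℕ × G) ℂ) ≠ 0 by
          rw [map_one]; exact one_ne_zero)
        (show iotaC G z * algebraMap (MvPolynomial (ℕ × G) ℂ) (KK G) 1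
            = algebraMap (MvPolynomial (ℕ × G) ℂ) (KK G) (MvPolynomial.C z) by
          rw [map_one, mul_one]; rfl),
        MvPolynomial.eval_C, map_one, div_one]
    have φL : ∀ x ∈ Ssub c, phiFun (ptOf μlam) x ∈ L := by
      intro x hx
      obtain ⟨a, b, hb, hxe, hLm⟩ := hrep x hx
      rw [phiFun_spec _ hb hxe]
      exact hLm
    have φsval : ∀ g h : G,
        phiFun (ptOf μlam) ((sKK c g h : (KK G)ˣ) : KK G) = ((βL g h : ↥L) : ℂ) := by
      intro g h
      rw [phiFun_spec _ (hXne (g * h)) (s_rep c g h)]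
      exact hvalβ g h
    obtain ⟨Θ, hΘw, hΘr⟩ := theta_exists c hnorm L σS hσ w hw (phiFun (ptOf μlam))
      φadd φmul φone φL B βL v (fun g h => (φsval g h).symm) hv
    refine ⟨phiFun (ptOf μlam), φadd, φmul, φone, fun z _ => φiota z, φL,
      ⟨fun _ => 1, fun g h => ?_⟩, ⟨Θ, fun g => ⟨1, by rw [hΘw g, one_smul]⟩, hΘr⟩⟩
    rw [φsval g h]
    norm_num

end Paper
end
end
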